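/- arXiv:math/0410142 — 8 statements merged into one kernel-verified Lean document; each statement's English description precedes it below -/
import Mathlib

section
/- Let h ≥ 0 be harmonic for kernel P and suppose h(x) ≤ s. Define σ_s = inf{i ≥ 0 : h(X_i) > s}. Then P_x(σ_s = ∞) > 0; that is, with positive probability the chain started at x satisfies h(X_i) ≤ s for all i ≥ 0. -/
open MeasureTheory ProbabilityTheory ENNReal Filter

/-- `μ` is the law of the Markov chain with transition kernel `P` started at `x`:
it is a probability measure, starts at `x`, and satisfies the Markov property. -/
structure IsMarkovChainLawAt {S : Type*} [MeasurableSpace S] (P : ProbabilityTheory.Kernel S S)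
    (μ : MeasureTheory.Measure (ℕ → S)) (x : S) : Prop where
  isProb : IsProbabilityMeasure μ
  start : μ {ω | ω 0 = x} = 1
  markov : ∀ (n : ℕ) (F : (Fin (n + 1) → S) → ℝ≥0∞) (g : S → ℝ≥0∞),
    Measurable F → Measurable g →
    ∫⁻ ω, F (fun i => ω i) * g (ω (n + 1)) ∂μ
      = ∫⁻ ω, F (fun i => ω i) * ∫⁻ y, g y ∂(P (ω n)) ∂μ

/-- `h` is harmonic for the kernel `P`: `h x = ∫ P(x, dy) h(y)` for all `x`. -/
def Harmonic {S : Type*} [MeasurableSpace S] (P : ProbabilityTheory.Kernel S S)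
    (h : S → ℝ) : Prop :=
  ∀ x, MeasureTheory.Integrable h (P x) ∧ h x = ∫ y, h y ∂(P x)

/-! Let `σ` be the first time `h(X_i) > s` and `A_n = {σ ≥ n}`. The Markov property and
harmonicity give `∫_{A_{n+1}} h(X_{n+1}) = ∫_{A_{n+1}} h(X_n)`, so splitting `A_n` along `{σ = n}`
telescopes to `E[h(X_σ); σ < n] + E[h(X_n); σ ≥ n] = h(x)` (the stopped martingale), and letting
`n → ∞` gives `E[h(X_σ); σ < ∞] ≤ h(x) ≤ s`. Since `h(X_σ) > s` on `{σ < ∞}`, this event cannot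
have full probability. -/

section StoppedChain

variable {S : Type*} {g : S → ℝ≥0∞} {t : ℝ≥0∞} {n : ℕ}

def stayBelow (g : S → ℝ≥0∞) (t : ℝ≥0∞) (n : ℕ) : Set (ℕ → S) :=
  {ω | ∀ i < n, g (ω i) ≤ t}

def firstExceedAt (g : S → ℝ≥0∞) (t : ℝ≥0∞) (n : ℕ) : Set (ℕ → S) :=
  stayBelow g t n ∩ {ω | t < g (ω n)}

/-- `g (X_σ)` on `{σ < ∞}` and `0` on `{σ = ∞}`, where `σ` is the first time `g (X_i) > t`. -/
noncomputable def valueAtFirstExceed (g : S → ℝ≥0∞) (t : ℝ≥0∞) (ω : ℕ → S) : ℝ≥0∞ :=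
  ∑' k, (firstExceedAt g t k).indicator (fun ω => g (ω k)) ω

@[simp]
lemma stayBelow_zero : stayBelow g t 0 = Set.univ := by
  simp [stayBelow]

lemma stayBelow_diff : stayBelow g t n \ {ω | t < g (ω n)} = stayBelow g t (n + 1) := by
  ext ω
  simp only [stayBelow, Set.mem_sdiff, Set.mem_ofPred_eq, not_lt, Nat.lt_succ_iff_lt_or_eq]
  constructor
  · rintro ⟨hlt, hn⟩ i (hi | rfl)
    exacts [hlt i hi, hn]
  · intro h
    exact ⟨fun i hi => h i (Or.inl hi), h n (Or.inr rfl)⟩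

lemma lt_valueAtFirstExceed {ω : ℕ → S} (hω : ∃ i, t < g (ω i)) :
    t < valueAtFirstExceed g t ω := by
  classical
  have hσ : ω ∈ firstExceedAt g t (Nat.find hω) :=
    ⟨fun i hi => not_lt.mp (Nat.find_min hω hi), Nat.find_spec hω⟩
  calc t < g (ω (Nat.find hω)) := Nat.find_spec hω
    _ = (firstExceedAt g t (Nat.find hω)).indicator (fun ω => g (ω (Nat.find hω))) ω :=
      (Set.indicator_of_mem hσ (fun ω => g (ω _))).symm
    _ ≤ valueAtFirstExceed g t ω := ENNReal.le_tsum _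

variable [MeasurableSpace S] {P : Kernel S S} {μ : Measure (ℕ → S)} {x : S}

lemma measurableSet_stayBelow (hg : Measurable g) (n : ℕ) : MeasurableSet (stayBelow g t n) := by
  simp only [stayBelow, Set.ofPred_forall]
  exact .iInter fun i => .iInter fun _ =>
    measurableSet_le (hg.comp (measurable_pi_apply i)) measurable_const

lemma measurableSet_firstExceedAt (hg : Measurable g) (n : ℕ) :
    MeasurableSet (firstExceedAt g t n) :=
  (measurableSet_stayBelow hg n).inter
    (measurableSet_lt measurable_const (hg.comp (measurable_pi_apply n)))

lemma measurable_indicator_firstExceedAt (hg : Measurable g) (k : ℕ) :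
    Measurable ((firstExceedAt g t k).indicator fun ω => g (ω k)) :=
  (hg.comp (measurable_pi_apply k)).indicator (measurableSet_firstExceedAt hg k)

lemma measurable_valueAtFirstExceed (hg : Measurable g) :
    Measurable (valueAtFirstExceed g t) :=
  .tsum (measurable_indicator_firstExceedAt hg)

namespace IsMarkovChainLawAt

lemma lintegral_comp_zero (hμ : IsMarkovChainLawAt P μ x) (hg : Measurable g) :
    ∫⁻ ω, g (ω 0) ∂μ = g x := by
  have := hμ.isProb
  have hstart : ∀ᵐ ω ∂μ, g (ω 0) = g x := by
    have hmeas : MeasurableSet {ω : ℕ → S | g (ω 0) = g x} :=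
      (hg.comp (measurable_pi_apply 0)) (measurableSet_singleton _)
    rw [ae_iff_measure_eq hmeas.nullMeasurableSet, measure_univ]
    exact le_antisymm prob_le_one (hμ.start ▸ measure_mono fun ω (hω : ω 0 = x) => by simp [hω])
  rw [lintegral_congr_ae hstart, lintegral_const, measure_univ, mul_one]

lemma lintegral_mul_comp_succ_le (hμ : IsMarkovChainLawAt P μ x) {n : ℕ}
    {F : (Fin (n + 1) → S) → ℝ≥0∞} (hF : Measurable F) (hg : Measurable g)
    (hsup : ∀ z, ∫⁻ y, g y ∂P z ≤ g z) :
    ∫⁻ ω, F (fun i => ω i) * g (ω (n + 1)) ∂μ ≤ ∫⁻ ω, F (fun i => ω i) * g (ω n) ∂μ := by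
  rw [hμ.markov n F g hF hg]
  gcongr with ω
  exact hsup _

lemma setLIntegral_stayBelow_succ_le (hμ : IsMarkovChainLawAt P μ x) (hg : Measurable g)
    (hsup : ∀ z, ∫⁻ y, g y ∂P z ≤ g z) (n : ℕ) :
    ∫⁻ ω in stayBelow g t (n + 1), g (ω (n + 1)) ∂μ
      ≤ ∫⁻ ω in stayBelow g t (n + 1), g (ω n) ∂μ := by
  classical
  set D : Set (Fin (n + 1) → S) := {v | ∀ i, g (v i) ≤ t}
  have hD : MeasurableSet D := by
    simp only [D, Set.ofPred_forall]
    exact .iInter fun i => measurableSet_le (hg.comp (measurable_pi_apply i)) measurable_const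
  have hindicator : ∀ (f : (ℕ → S) → ℝ≥0∞) ω,
      (stayBelow g t (n + 1)).indicator f ω = D.indicator 1 (fun i => ω i) * f ω := by
    intro f ω
    have hmem : (fun i : Fin (n + 1) => ω i) ∈ D ↔ ω ∈ stayBelow g t (n + 1) :=
      ⟨fun h i hi => h ⟨i, hi⟩, fun h i => h i i.isLt⟩
    by_cases hω : ω ∈ stayBelow g t (n + 1) <;> simp [hω, hmem]
  simp only [← lintegral_indicator (measurableSet_stayBelow hg _), hindicator]
  exact hμ.lintegral_mul_comp_succ_le (measurable_const.indicator hD) hg hsup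

lemma sum_setLIntegral_firstExceedAt_add_le (hμ : IsMarkovChainLawAt P μ x) (hg : Measurable g)
    (hsup : ∀ z, ∫⁻ y, g y ∂P z ≤ g z) (n : ℕ) :
    ∑ k ∈ Finset.range n, ∫⁻ ω in firstExceedAt g t k, g (ω k) ∂μ
      + ∫⁻ ω in stayBelow g t n, g (ω n) ∂μ ≤ g x := by
  induction n with
  | zero => simp [hμ.lintegral_comp_zero hg]
  | succ n ih =>
    have hsplit := lintegral_inter_add_sdiff (μ := μ) (B := {ω | t < g (ω n)})
      (fun ω => g (ω n)) (stayBelow g t n)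
      (measurableSet_lt measurable_const (hg.comp (measurable_pi_apply n)))
    rw [stayBelow_diff] at hsplit
    calc _ ≤ ∑ k ∈ Finset.range n, ∫⁻ ω in firstExceedAt g t k, g (ω k) ∂μ
          + (∫⁻ ω in firstExceedAt g t n, g (ω n) ∂μ
            + ∫⁻ ω in stayBelow g t (n + 1), g (ω n) ∂μ) := by
          rw [Finset.sum_range_succ, add_assoc]
          gcongr _ + (_ + ?_)
          exact hμ.setLIntegral_stayBelow_succ_le hg hsup n
      _ = _ := by rw [firstExceedAt, hsplit]
      _ ≤ g x := ih

lemma lintegral_valueAtFirstExceed_le (hμ : IsMarkovChainLawAt P μ x) (hg : Measurable g)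
    (hsup : ∀ z, ∫⁻ y, g y ∂P z ≤ g z) :
    ∫⁻ ω, valueAtFirstExceed g t ω ∂μ ≤ g x := by
  unfold valueAtFirstExceed
  rw [lintegral_tsum fun k => (measurable_indicator_firstExceedAt hg k).aemeasurable]
  refine ENNReal.tsum_le_of_sum_range_le fun n => ?_
  simp only [lintegral_indicator (measurableSet_firstExceedAt hg _)]
  exact le_self_add.trans (hμ.sum_setLIntegral_firstExceedAt_add_le hg hsup n)

theorem measure_forall_le_pos (hμ : IsMarkovChainLawAt P μ x) (hg : Measurable g)
    (hsup : ∀ z, ∫⁻ y, g y ∂P z ≤ g z) (hxt : g x ≤ t) :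
    0 < μ {ω | ∀ i, g (ω i) ≤ t} := by
  have := hμ.isProb
  rcases eq_or_ne t ∞ with rfl | ht
  · simp
  by_contra hnull
  have hescape : ∀ᵐ ω ∂μ, t < valueAtFirstExceed g t ω := by
    have hnever : ∀ᵐ ω ∂μ, ¬ ∀ i, g (ω i) ≤ t :=
      measure_eq_zero_iff_ae_notMem.mp (nonpos_iff_eq_zero.mp (not_lt.mp hnull))
    filter_upwards [hnever] with ω hω
    exact lt_valueAtFirstExceed (by simpa only [not_forall, not_le] using hω)
  have hlt := lintegral_strict_mono (IsProbabilityMeasure.ne_zero μ)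
    (measurable_valueAtFirstExceed hg).aemeasurable (by simpa using ht) hescape
  simp only [lintegral_const, measure_univ, mul_one] at hlt
  exact (hlt.trans_le (hμ.lintegral_valueAtFirstExceed_le hg hsup)).not_ge hxt

end IsMarkovChainLawAt

end StoppedChain

lemma Harmonic.lintegral_ofReal_eq {S : Type*} [MeasurableSpace S] {P : Kernel S S}
    {h : S → ℝ} (hharm : Harmonic P h) (hnonneg : ∀ y, 0 ≤ h y) (z : S) :
    ∫⁻ y, ENNReal.ofReal (h y) ∂P z = ENNReal.ofReal (h z) := by
  rw [← ofReal_integral_eq_lintegral_ofReal (hharm z).1 (.of_forall hnonneg), ← (hharm z).2]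

theorem prob_stay_below_pos_general {S : Type*} [MeasurableSpace S]
    (P : ProbabilityTheory.Kernel S S)
    (Plaw : S → MeasureTheory.Measure (ℕ → S))
    (hlaw : ∀ x, IsMarkovChainLawAt P (Plaw x) x)
    (h : S → ℝ) (hmeas : Measurable h) (hnonneg : ∀ y, 0 ≤ h y)
    (hharm : Harmonic P h) (x : S) (s : ℝ) (hxs : h x ≤ s) :
    0 < Plaw x {ω | ∀ i, h (ω i) ≤ s} := by
  have hs : 0 ≤ s := (hnonneg x).trans hxs
  have hpos := (hlaw x).measure_forall_le_pos hmeas.ennreal_ofReal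
    (fun z => (hharm.lintegral_ofReal_eq hnonneg z).le) (ENNReal.ofReal_le_ofReal hxs)
  simpa only [ENNReal.ofReal_le_ofReal_iff hs] using hpos

/-- Lemma 4: if `h ≥ 0` is harmonic for `P` and `h x ≤ s`, then with positive probability
the chain started at `x` satisfies `h(X_i) ≤ s` for all `i ≥ 0` (i.e. `P_x(σ_s = ∞) > 0`). -/
theorem prob_stay_below_pos {S : Type*} [MeasurableSpace S]
    (P : ProbabilityTheory.Kernel S S) [IsMarkovKernel P]
    (Plaw : S → MeasureTheory.Measure (ℕ → S))
    (hlaw : ∀ x, IsMarkovChainLawAt P (Plaw x) x)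
    (h : S → ℝ) (hmeas : Measurable h) (hnonneg : ∀ y, 0 ≤ h y)
    (hharm : Harmonic P h) (x : S) (s : ℝ) (hs : 0 ≤ s) (hxs : h x ≤ s) :
    0 < Plaw x {ω | ∀ i, h (ω i) ≤ s} :=
  prob_stay_below_pos_general P Plaw hlaw h hmeas hnonneg hharm x s hxs
end

section
/- Under P_x, the chain (X_n) conditioned on the event {h(X_i) ≤ s for all i ∈ ℕ₀} is a Markov chain with transition kernel Q_s(x,dy) = q_s(y) P(x,dy) / q_s(x); explicitly, for all n and measurable sets, P_x(X_1 ∈ dx_1, …, X_n ∈ dx_n | h(X_i) ≤ s ∀ i) = Q_s(x,dx_1) ⋯ Q_s(x_{n-1},dx_n). -/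
open MeasureTheory ProbabilityTheory ENNReal Filter

/-- The iterated integral `Q_s(x, dx_{k}) ⋯ Q_s(x_{k+n-1}, dx_{k+n})` of the Doob transform
`Q_s(x,dy) = q_s(y) P(x,dy) / q_s(x)` over the sets `B k, …, B (k+n-1)`. -/
noncomputable def iterQ {S : Type*} [MeasurableSpace S] (P : ProbabilityTheory.Kernel S S)
    (qs : S → ℝ≥0∞) (B : ℕ → Set S) : ℕ → ℕ → S → ℝ≥0∞
  | _, 0, _ => 1
  | k, n + 1, x => ∫⁻ y in B k, (qs y / qs x) * iterQ P qs B (k + 1) n y ∂(P x)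

/-!
Write `T = {h ≤ s}` and `q(y) = P_y(X_i ∈ T ∀ i)`. Events of the form `{X_i ∈ D_i ∀ i}` are
decreasing limits of cylinders, whose probabilities are iterated kernel integrals by the Markov
property; passing to the limit by monotone convergence gives the first-step decomposition
`P_x(X_i ∈ D_i ∀ i) = 1_{D_0}(x) ∫ P(x,dy) P_y(X_i ∈ D_{i+1} ∀ i)`. Applied to
`D_i = B_i ∩ T` for `1 ≤ i ≤ n` and `D_i = T` otherwise, induction on `n` yields
`P_x(X_1 ∈ B_1, …, X_n ∈ B_n, X_i ∈ T ∀ i) = q(x) Q_s(x,dx_1) ⋯ Q_s(x_{n-1},dx_n)`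
as soon as `q > 0` on `T`, and dividing by `q(x)` gives the claim.

Positivity of `q` on `T` comes from the nonnegative supermartingale `h(X_n)`. By induction on
the horizon, `q ≥ 1 - h/s` (Doob's maximal inequality), so `q(w) = 0` forces `h(w) ≥ s`. If
`z ∈ Z = {h ≤ s, q = 0}`, then `∫ P(z,dw) q(w) = q(z) = 0`, so `P(z,·)`-a.e. `q(w) = 0` and
`h(w) ≥ s = h(z) ≥ ∫ P(z,dw) h(w)`, hence `h(w) = s` and `w ∈ Z`. A chain started in the absorbing
set `Z ⊆ T` never leaves it, so `q = 1` on `Z`, contradicting `q = 0` there.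
-/

open Set

theorem antitone_pi_range {S : Type*} (D : ℕ → Set S) :
    Antitone fun m => (Finset.range m : Set ℕ).pi D :=
  fun _ _ hab => pi_mono' (fun _ _ => subset_rfl) (by simpa using Finset.range_mono hab)

theorem iInter_pi_range {S : Type*} (D : ℕ → Set S) :
    ⋂ m, (Finset.range m : Set ℕ).pi D = univ.pi D := by
  ext ω
  simp only [mem_iInter, Set.mem_pi, Finset.coe_range, mem_Iio, mem_univ, forall_const]
  exact ⟨fun h i => h (i + 1) i i.lt_succ_self, fun h _ i _ => h i⟩

section PathMeasure

variable {S : Type*} [MeasurableSpace S] {ν : Measure (ℕ → S)} {D : ℕ → Set S}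

theorem measure_pi_range_eq_lintegral_prod (hD : ∀ i, MeasurableSet (D i)) (m : ℕ) :
    ν ((Finset.range m : Set ℕ).pi D)
      = ∫⁻ ω, ∏ i ∈ Finset.range m, (D i).indicator 1 (ω i) ∂ν := by
  simp_rw [← indicator_pi_one_apply]
  exact (lintegral_indicator_one (MeasurableSet.pi (to_countable _) fun i _ => hD i)).symm

theorem measure_univ_pi_eq_iInf [IsFiniteMeasure ν] (hD : ∀ i, MeasurableSet (D i)) :
    ν (univ.pi D) = ⨅ m, ν ((Finset.range m : Set ℕ).pi D) := by
  rw [← iInter_pi_range, (antitone_pi_range D).measure_iInter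
    (fun m => (MeasurableSet.pi (to_countable _) fun i _ => hD i).nullMeasurableSet)
    ⟨0, measure_ne_top _ _⟩]

end PathMeasure

theorem ofReal_integral_le_lintegral_ofReal {α : Type*} [MeasurableSpace α] {ν : Measure α}
    {f : α → ℝ} (hf : Integrable f ν) :
    ENNReal.ofReal (∫ a, f a ∂ν) ≤ ∫⁻ a, .ofReal (f a) ∂ν := by
  rw [integral_eq_lintegral_pos_part_sub_lintegral_neg_part hf]
  exact (ENNReal.ofReal_le_ofReal (sub_le_self _ toReal_nonneg)).trans ofReal_toReal_le

theorem iterQ_succ_eq_iterQ_shift {S : Type*} [MeasurableSpace S] (P : Kernel S S)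
    (q : S → ℝ≥0∞) (B : ℕ → Set S) (n k : ℕ) (y : S) :
    iterQ P q B (k + 1) n y = iterQ P q (fun i => B (i + 1)) k n y := by
  induction n generalizing k y with
  | zero => rfl
  | succ n ih => simp only [iterQ, ih]

namespace IsMarkovChainLawAt

variable {S : Type*} [MeasurableSpace S] {P : Kernel S S} {μ : Measure (ℕ → S)} {x : S}

theorem ae_eval_zero_mem_iff (hμ : IsMarkovChainLawAt P μ x) {C : Set S}
    (hC : MeasurableSet C) : ∀ᵐ ω ∂μ, (ω 0 ∈ C ↔ x ∈ C) := by
  have := hμ.isProb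
  have h0 : MeasurableSet {ω : ℕ → S | ω 0 ∈ C} := measurable_pi_apply 0 hC
  have hmeas : MeasurableSet {ω : ℕ → S | ω 0 ∈ C ↔ x ∈ C} := by
    by_cases hx : x ∈ C
    · simpa only [hx, iff_true] using h0
    · simp only [hx, iff_false]
      exact h0.compl
  refine (prob_compl_eq_zero_iff hmeas).mpr (le_antisymm prob_le_one ?_)
  exact hμ.start ▸ measure_mono fun ω (hω : ω 0 = x) => by simp [hω]

theorem lintegral_comp_eval_zero (hμ : IsMarkovChainLawAt P μ x) {g : S → ℝ≥0∞}
    (hg : Measurable g) : ∫⁻ ω, g (ω 0) ∂μ = g x := by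
  have := hμ.isProb
  have hae : ∀ᵐ ω ∂μ, g (ω 0) = g x := by
    filter_upwards [hμ.ae_eval_zero_mem_iff (hg (measurableSet_singleton (g x)))] with ω hω
    simpa using hω
  rw [lintegral_congr_ae hae, lintegral_const, measure_univ, mul_one]

theorem measure_eval_zero_mem_inter (hμ : IsMarkovChainLawAt P μ x) {C : Set S}
    (hC : MeasurableSet C) (F : Set (ℕ → S)) :
    μ ({ω | ω 0 ∈ C} ∩ F) = C.indicator 1 x * μ F := by
  have hae := hμ.ae_eval_zero_mem_iff hC
  by_cases hx : x ∈ C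
  · rw [indicator_of_mem hx, Pi.one_apply, one_mul, inter_comm, measure_inter_conull]
    exact ae_iff.mp (by simpa [hx] using hae)
  · rw [indicator_of_notMem hx, zero_mul]
    exact measure_mono_null inter_subset_left
      (measure_eq_zero_iff_ae_notMem.mpr (by simpa [hx] using hae))

theorem lintegral_prod_mul (hμ : IsMarkovChainLawAt P μ x) (n : ℕ) {f : ℕ → S → ℝ≥0∞}
    (hf : ∀ i, Measurable (f i)) {g : S → ℝ≥0∞} (hg : Measurable g) :
    ∫⁻ ω, (∏ i ∈ Finset.range (n + 1), f i (ω i)) * g (ω (n + 1)) ∂μ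
      = ∫⁻ ω, (∏ i ∈ Finset.range (n + 1), f i (ω i)) * ∫⁻ y, g y ∂P (ω n) ∂μ := by
  have hprod (ω : ℕ → S) := Fin.prod_univ_eq_prod_range (fun i => f i (ω i)) (n + 1)
  simpa only [hprod] using hμ.markov n (fun v => ∏ i : Fin (n + 1), f i (v i)) g
    (Finset.measurable_prod _ fun i _ => (hf i).comp (measurable_pi_apply i)) hg

end IsMarkovChainLawAt

section MarkovFamily

variable {S : Type*} [MeasurableSpace S] {P : Kernel S S} {μ : S → Measure (ℕ → S)}
  {D : ℕ → Set S} {T : Set S} {h : S → ℝ} {s : ℝ}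

theorem lintegral_prod_mul_eq_first_step (hμ : ∀ y, IsMarkovChainLawAt P (μ y) y)
    {f : ℕ → S → ℝ≥0∞} (hf : ∀ i, Measurable (f i)) (m : ℕ) {g : S → ℝ≥0∞}
    (hg : Measurable g) (x : S) :
    ∫⁻ ω, (∏ i ∈ Finset.range (m + 1), f i (ω i)) * g (ω (m + 1)) ∂μ x
      = f 0 x * ∫⁻ y, ∫⁻ ω, (∏ i ∈ Finset.range m, f (i + 1) (ω i)) * g (ω m) ∂μ y ∂P x := by
  induction m generalizing g with
  | zero =>
    rw [(hμ x).lintegral_prod_mul 0 hf hg]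
    simp only [zero_add, Finset.prod_range_one, Finset.range_zero, Finset.prod_empty, one_mul]
    rw [(hμ x).lintegral_comp_eval_zero (g := fun z => f 0 z * ∫⁻ y, g y ∂P z)
      ((hf 0).mul hg.lintegral_kernel)]
    exact congrArg _ (lintegral_congr fun y => ((hμ y).lintegral_comp_eval_zero hg).symm)
  | succ m ih =>
    calc ∫⁻ ω, (∏ i ∈ Finset.range (m + 2), f i (ω i)) * g (ω (m + 2)) ∂μ x
        = ∫⁻ ω, (∏ i ∈ Finset.range (m + 1), f i (ω i))
            * (f (m + 1) (ω (m + 1)) * ∫⁻ y, g y ∂P (ω (m + 1))) ∂μ x := by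
          rw [(hμ x).lintegral_prod_mul (m + 1) hf hg]
          exact lintegral_congr fun ω => by rw [Finset.prod_range_succ, mul_assoc]
      _ = f 0 x * ∫⁻ y, ∫⁻ ω, (∏ i ∈ Finset.range m, f (i + 1) (ω i))
            * (f (m + 1) (ω m) * ∫⁻ y, g y ∂P (ω m)) ∂μ y ∂P x :=
          ih ((hf (m + 1)).mul hg.lintegral_kernel)
      _ = f 0 x * ∫⁻ y, ∫⁻ ω, (∏ i ∈ Finset.range (m + 1), f (i + 1) (ω i))
            * g (ω (m + 1)) ∂μ y ∂P x := by
          refine congrArg _ (lintegral_congr fun y => ?_)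
          rw [(hμ y).lintegral_prod_mul m (fun i => hf (i + 1)) hg]
          exact lintegral_congr fun ω => by rw [Finset.prod_range_succ, mul_assoc]

variable [IsMarkovKernel P]

theorem measure_pi_range_succ (hμ : ∀ y, IsMarkovChainLawAt P (μ y) y)
    (hD : ∀ i, MeasurableSet (D i)) (m : ℕ) (x : S) :
    μ x ((Finset.range (m + 1) : Set ℕ).pi D)
      = (D 0).indicator 1 x
          * ∫⁻ y, μ y ((Finset.range m : Set ℕ).pi fun i => D (i + 1)) ∂P x := by
  have := fun y => (hμ y).isProb
  have hind (i : ℕ) : Measurable ((D i).indicator (1 : S → ℝ≥0∞)) :=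
    measurable_one.indicator (hD i)
  rw [measure_pi_range_eq_lintegral_prod hD]
  cases m with
  | zero =>
    simp only [zero_add, Finset.prod_range_one, Finset.range_zero, Finset.coe_empty, empty_pi,
      measure_univ, lintegral_one, mul_one]
    exact (hμ x).lintegral_comp_eval_zero (hind 0)
  | succ m =>
    rw [lintegral_congr fun ω => Finset.prod_range_succ _ _,
      lintegral_prod_mul_eq_first_step hμ hind m (hind (m + 1))]
    refine congrArg _ (lintegral_congr fun y => ?_)
    rw [measure_pi_range_eq_lintegral_prod fun i => hD (i + 1),
      lintegral_congr fun ω => Finset.prod_range_succ _ _]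

theorem measurable_measure_pi_range (hμ : ∀ y, IsMarkovChainLawAt P (μ y) y)
    (hD : ∀ i, MeasurableSet (D i)) (m : ℕ) :
    Measurable fun y => μ y ((Finset.range m : Set ℕ).pi D) := by
  have := fun y => (hμ y).isProb
  induction m generalizing D with
  | zero =>
    simp only [Finset.range_zero, Finset.coe_empty, empty_pi, measure_univ]
    exact measurable_const
  | succ m ih =>
    simp only [measure_pi_range_succ hμ hD]
    exact (measurable_one.indicator (hD 0)).mul (ih fun i => hD (i + 1)).lintegral_kernel

theorem measurable_measure_univ_pi (hμ : ∀ y, IsMarkovChainLawAt P (μ y) y)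
    (hD : ∀ i, MeasurableSet (D i)) : Measurable fun y => μ y (univ.pi D) := by
  have := fun y => (hμ y).isProb
  simp only [measure_univ_pi_eq_iInf hD]
  exact .iInf fun m => measurable_measure_pi_range hμ hD m

theorem measure_univ_pi_succ (hμ : ∀ y, IsMarkovChainLawAt P (μ y) y)
    (hD : ∀ i, MeasurableSet (D i)) (x : S) :
    μ x (univ.pi D) = (D 0).indicator 1 x * ∫⁻ y, μ y (univ.pi fun i => D (i + 1)) ∂P x := by
  have := fun y => (hμ y).isProb
  have hD' (i : ℕ) : MeasurableSet (D (i + 1)) := hD (i + 1)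
  have hanti : Antitone fun m => μ x ((Finset.range m : Set ℕ).pi D) :=
    fun _ _ h => measure_mono (antitone_pi_range D h)
  have hfin : ∫⁻ y, μ y ((Finset.range 0 : Set ℕ).pi fun i => D (i + 1)) ∂P x ≠ ⊤ := by simp
  rw [measure_univ_pi_eq_iInf hD, ← hanti.iInf_nat_add 1]
  simp only [measure_pi_range_succ hμ hD, measure_univ_pi_eq_iInf hD']
  rw [lintegral_iInf (measurable_measure_pi_range hμ hD')
    (fun _ _ h y => measure_mono (antitone_pi_range _ h)) hfin]
  by_cases hx : x ∈ D 0 <;> simp [hx]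

theorem measure_prefix_inter_univ_pi_succ (hμ : ∀ y, IsMarkovChainLawAt P (μ y) y)
    (hT : MeasurableSet T) {B : ℕ → Set S} (hB : ∀ i, MeasurableSet (B i)) (n : ℕ) (x : S) :
    μ x ({ω | ∀ i, 1 ≤ i → i ≤ n + 1 → ω i ∈ B i} ∩ univ.pi fun _ => T)
      = T.indicator 1 x * ∫⁻ y, (B 1).indicator 1 y
          * μ y ({ω | ∀ i, 1 ≤ i → i ≤ n → ω i ∈ B (i + 1)} ∩ univ.pi fun _ => T) ∂P x := by
  classical
  set D : ℕ → Set S := fun i => T ∩ if 1 ≤ i ∧ i ≤ n + 1 then B i else univ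
  have hD (i : ℕ) : MeasurableSet (D i) := hT.inter (by split_ifs; exacts [hB i, .univ])
  have hset : {ω | ∀ i, 1 ≤ i → i ≤ n + 1 → ω i ∈ B i} ∩ univ.pi (fun _ => T) = univ.pi D := by
    ext ω
    simp only [D, mem_inter_iff, mem_ofPred_eq, mem_univ_pi, mem_ite_univ_right, forall_and,
      and_imp]
    exact and_comm
  have hD0 : D 0 = T := by simp [D]
  rw [hset, measure_univ_pi_succ hμ hD, hD0]
  refine congrArg _ (lintegral_congr fun y => ?_)
  rw [← (hμ y).measure_eval_zero_mem_inter (hB 1)]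
  congr 1
  ext ω
  simp only [D, mem_inter_iff, mem_ofPred_eq, mem_univ_pi, mem_ite_univ_right]
  constructor
  · intro hω
    exact ⟨(hω 0).2 ⟨le_rfl, by omega⟩, fun i _ hi => (hω i).2 ⟨by omega, by omega⟩,
      fun i => (hω i).1⟩
  · rintro ⟨hω0, hωB, hωT⟩ i
    refine ⟨hωT i, fun hi => ?_⟩
    rcases i with _ | i
    exacts [hω0, hωB _ (by omega) (by omega)]

theorem measure_prefix_inter_univ_pi_eq_mul_iterQ (hμ : ∀ y, IsMarkovChainLawAt P (μ y) y)
    (hT : MeasurableSet T) (hpos : ∀ y ∈ T, μ y (univ.pi fun _ => T) ≠ 0)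
    {B : ℕ → Set S} (hB : ∀ i, MeasurableSet (B i)) (n : ℕ) (x : S) :
    μ x ({ω | ∀ i, 1 ≤ i → i ≤ n → ω i ∈ B i} ∩ univ.pi fun _ => T)
      = μ x (univ.pi fun _ => T) * iterQ P (fun y => μ y (univ.pi fun _ => T)) B 1 n x := by
  induction n generalizing B x with
  | zero =>
    rw [show iterQ P _ B 1 0 x = 1 from rfl, mul_one]
    congr 1
    ext ω
    simp only [mem_inter_iff, mem_ofPred_eq, and_iff_right_iff_imp]
    exact fun _ i h1 h0 => absurd (h1.trans h0) (by omega)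
  | succ n ih =>
    rw [measure_prefix_inter_univ_pi_succ hμ hT hB,
      lintegral_congr fun y => by rw [ih (fun i => hB (i + 1)) y]]
    by_cases hx : x ∈ T
    · have := (hμ x).isProb
      have hqx : μ x (univ.pi fun _ => T) ≠ ⊤ := measure_ne_top _ _
      rw [indicator_of_mem hx, Pi.one_apply, one_mul, iterQ, ← lintegral_indicator (hB 1),
        ← lintegral_const_mul' _ _ hqx]
      refine lintegral_congr fun y => ?_
      by_cases hy : y ∈ B 1
      · rw [indicator_of_mem hy, indicator_of_mem hy, Pi.one_apply, one_mul, ← mul_assoc,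
          ENNReal.mul_div_cancel (hpos x hx) hqx, iterQ_succ_eq_iterQ_shift P _ B n 1]
      · simp [hy]
    · have hqx : μ x (univ.pi fun _ => T) = 0 := by
        rw [measure_univ_pi_succ hμ (fun _ => hT), indicator_of_notMem hx, zero_mul]
      rw [indicator_of_notMem hx, hqx, zero_mul, zero_mul]

theorem measure_univ_pi_eq_one_of_ae_mem (hμ : ∀ y, IsMarkovChainLawAt P (μ y) y)
    (hT : MeasurableSet T) (habs : ∀ z ∈ T, ∀ᵐ w ∂P z, w ∈ T) {x : S} (hx : x ∈ T) :
    μ x (univ.pi fun _ => T) = 1 := by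
  have := fun y => (hμ y).isProb
  have hcyl (m : ℕ) : ∀ y ∈ T, μ y ((Finset.range m : Set ℕ).pi fun _ => T) = 1 := by
    induction m with
    | zero => simp
    | succ m ih =>
      intro y hy
      rw [measure_pi_range_succ hμ (fun _ => hT), indicator_of_mem hy, Pi.one_apply, one_mul,
        lintegral_congr_ae ((habs y hy).mono ih), lintegral_one, measure_univ]
  simp only [measure_univ_pi_eq_iInf fun _ => hT, hcyl _ x hx, iInf_const]

theorem ofReal_one_sub_div_le_measure_pi_range (hμ : ∀ y, IsMarkovChainLawAt P (μ y) y)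
    (hmeas : Measurable h) (hnonneg : ∀ y, 0 ≤ h y) (hint : ∀ y, Integrable h (P y))
    (hsuper : ∀ y, ∫ z, h z ∂P y ≤ h y) (hs : 0 < s) (m : ℕ) (y : S) :
    ENNReal.ofReal (1 - h y / s) ≤ μ y ((Finset.range m : Set ℕ).pi fun _ => {z | h z ≤ s}) := by
  have := fun y => (hμ y).isProb
  induction m generalizing y with
  | zero =>
    simp only [Finset.range_zero, Finset.coe_empty, empty_pi, measure_univ]
    exact ENNReal.ofReal_le_one.mpr (sub_le_self _ (div_nonneg (hnonneg y) hs.le))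
  | succ m ih =>
    rcases le_or_gt (1 - h y / s) 0 with hy | hy
    · simp [ENNReal.ofReal_eq_zero.mpr hy]
    · have hys : y ∈ {z | h z ≤ s} := ((div_lt_one hs).mp (by linarith)).le
      have hint' : Integrable (fun z => 1 - h z / s) (P y) :=
        (integrable_const 1).sub ((hint y).div_const s)
      rw [measure_pi_range_succ hμ (fun _ => measurableSet_le hmeas measurable_const),
        indicator_of_mem hys, Pi.one_apply, one_mul]
      calc ENNReal.ofReal (1 - h y / s)
          ≤ ENNReal.ofReal (∫ z, (1 - h z / s) ∂P y) := by
            refine ENNReal.ofReal_le_ofReal ?_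
            rw [integral_sub (integrable_const 1) ((hint y).div_const s), integral_const,
              integral_div, probReal_univ, one_smul]
            gcongr
            exact hsuper y
        _ ≤ ∫⁻ z, ENNReal.ofReal (1 - h z / s) ∂P y := ofReal_integral_le_lintegral_ofReal hint'
        _ ≤ _ := lintegral_mono ih

theorem le_of_measure_univ_pi_eq_zero (hμ : ∀ y, IsMarkovChainLawAt P (μ y) y)
    (hmeas : Measurable h) (hnonneg : ∀ y, 0 ≤ h y) (hint : ∀ y, Integrable h (P y))
    (hsuper : ∀ y, ∫ z, h z ∂P y ≤ h y) (hs : 0 ≤ s) {y : S}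
    (hy : μ y (univ.pi fun _ => {z | h z ≤ s}) = 0) : s ≤ h y := by
  rcases hs.eq_or_lt with rfl | hs
  · exact hnonneg y
  by_contra! hys
  have := (hμ y).isProb
  have hbound : ENNReal.ofReal (1 - h y / s) ≤ 0 := by
    rw [← hy, measure_univ_pi_eq_iInf fun _ => measurableSet_le hmeas measurable_const]
    exact le_iInf fun m =>
      ofReal_one_sub_div_le_measure_pi_range hμ hmeas hnonneg hint hsuper hs m y
  have : h y / s < 1 := (div_lt_one hs).mpr hys
  simp only [nonpos_iff_eq_zero, ENNReal.ofReal_eq_zero] at hbound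
  linarith

theorem ae_le_and_measure_univ_pi_eq_zero (hμ : ∀ y, IsMarkovChainLawAt P (μ y) y)
    (hmeas : Measurable h) (hnonneg : ∀ y, 0 ≤ h y) (hint : ∀ y, Integrable h (P y))
    (hsuper : ∀ y, ∫ z, h z ∂P y ≤ h y) (hs : 0 ≤ s) {z : S} (hz : h z ≤ s)
    (hz0 : μ z (univ.pi fun _ => {z | h z ≤ s}) = 0) :
    ∀ᵐ w ∂P z, h w ≤ s ∧ μ w (univ.pi fun _ => {z | h z ≤ s}) = 0 := by
  have hT : MeasurableSet {z | h z ≤ s} := measurableSet_le hmeas measurable_const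
  have hq0 : ∀ᵐ w ∂P z, μ w (univ.pi fun _ => {z | h z ≤ s}) = 0 := by
    rw [measure_univ_pi_succ hμ (fun _ => hT), indicator_of_mem (show z ∈ {z | h z ≤ s} from hz),
      Pi.one_apply, one_mul] at hz0
    exact (lintegral_eq_zero_iff (measurable_measure_univ_pi hμ fun _ => hT)).mp hz0
  have hle_of_eq_zero {y : S} :=
    le_of_measure_univ_pi_eq_zero (y := y) hμ hmeas hnonneg hint hsuper hs
  have hsle : ∀ᵐ w ∂P z, 0 ≤ h w - s :=
    hq0.mono fun w hw => sub_nonneg.mpr (hle_of_eq_zero hw)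
  have hint0 : ∫ w, (h w - s) ∂P z = 0 := by
    refine le_antisymm ?_ (integral_nonneg_of_ae hsle)
    rw [integral_sub (hint z) (integrable_const s), integral_const, probReal_univ, one_smul]
    linarith [hsuper z, hle_of_eq_zero hz0]
  filter_upwards [hq0, (integral_eq_zero_iff_of_nonneg_ae hsle
    ((hint z).sub (integrable_const s))).mp hint0] with w hw0 hws
  exact ⟨(sub_eq_zero.mp hws).le, hw0⟩

theorem measure_univ_pi_ne_zero (hμ : ∀ y, IsMarkovChainLawAt P (μ y) y)
    (hmeas : Measurable h) (hnonneg : ∀ y, 0 ≤ h y) (hint : ∀ y, Integrable h (P y))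
    (hsuper : ∀ y, ∫ z, h z ∂P y ≤ h y) (hs : 0 ≤ s) {x : S} (hx : h x ≤ s) :
    μ x (univ.pi fun _ => {z | h z ≤ s}) ≠ 0 := by
  intro hx0
  set Z := {z | h z ≤ s ∧ μ z (univ.pi fun _ => {z | h z ≤ s}) = 0}
  have hZ : MeasurableSet Z := (measurableSet_le hmeas measurable_const).inter
    (measurable_measure_univ_pi hμ (fun _ => measurableSet_le hmeas measurable_const)
      (measurableSet_singleton 0))
  have hone : μ x (univ.pi fun _ => Z) = 1 := measure_univ_pi_eq_one_of_ae_mem hμ hZ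
    (fun z hz => ae_le_and_measure_univ_pi_eq_zero hμ hmeas hnonneg hint hsuper hs hz.1 hz.2)
    ⟨hx, hx0⟩
  have hmono : μ x (univ.pi fun _ => Z) ≤ μ x (univ.pi fun _ => {z | h z ≤ s}) :=
    measure_mono (pi_mono fun _ _ _ hw => hw.1)
  rw [hone, hx0] at hmono
  exact one_ne_zero (nonpos_iff_eq_zero.mp hmono)

end MarkovFamily

/-- Lemma 5: under `P_x`, the chain conditioned on `{h(X_i) ≤ s ∀ i}` is a Markov chain with
kernel `Q_s(x,dy) = q_s(y) P(x,dy)/q_s(x)`: for all `n` and measurable `B_1, …, B_n`,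
`P_x(X_1 ∈ B_1, …, X_n ∈ B_n | h(X_i) ≤ s ∀ i) = Q_s(x,B_1 dx_1) ⋯ Q_s(x_{n-1}, dx_n)`. -/
theorem conditioned_chain_markov {S : Type*} [MeasurableSpace S]
    (P : ProbabilityTheory.Kernel S S) [IsMarkovKernel P]
    (Plaw : S → MeasureTheory.Measure (ℕ → S))
    (hlaw : ∀ x, IsMarkovChainLawAt P (Plaw x) x)
    (h : S → ℝ) (hmeas : Measurable h) (hnonneg : ∀ y, 0 ≤ h y)
    (hharm : Harmonic P h) (s : ℝ) (hs : 0 ≤ s)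
    (x : S) (hxs : h x ≤ s)
    (n : ℕ) (B : ℕ → Set S) (hB : ∀ i, MeasurableSet (B i)) :
    Plaw x ({ω | ∀ i, 1 ≤ i → i ≤ n → ω i ∈ B i} ∩ {ω | ∀ i, h (ω i) ≤ s})
        / Plaw x {ω | ∀ i, h (ω i) ≤ s}
      = iterQ P (fun y => Plaw y {ω | ∀ i, h (ω i) ≤ s}) B 1 n x := by
  have hE : {ω : ℕ → S | ∀ i, h (ω i) ≤ s} = univ.pi fun _ => {y | h y ≤ s} := by
    ext ω
    simp
  have hpos {y : S} (hy : h y ≤ s) : Plaw y (univ.pi fun _ => {y | h y ≤ s}) ≠ 0 :=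
    measure_univ_pi_ne_zero hlaw hmeas hnonneg (fun z => (hharm z).1)
      (fun z => (hharm z).2.ge) hs hy
  have := (hlaw x).isProb
  rw [hE, measure_prefix_inter_univ_pi_eq_mul_iterQ hlaw
    (measurableSet_le hmeas measurable_const) (fun _ => hpos) hB, mul_comm,
    ENNReal.mul_div_cancel_right (hpos hxs) (measure_ne_top _ _)]
end

section
/- Let h be harmonic for P with 0 < h(o) ≤ h(x). Let U be uniform on (0, h(o)^{-1}), independent of the chain under P_x^h, and σ = σ_{h(x)} = inf{i : h(X_i) > h(x)}. Then P_x^h( h(X_σ)^{-1} 1_{σ < ∞} < U ≤ h(x)^{-1} ) = (h(o)/h(x)) · q_{h(x)}(x), where q_{h(x)}(x) = P_x(h(X_i) ≤ h(x) ∀ i). -/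
open MeasureTheory ProbabilityTheory ENNReal Filter

/-- `Plawh` is the `h`-transformed family of laws of the chain with laws `Plaw`:
for `h x > 0`, `Plawh x` is a probability measure starting at `x` and
`E_x^h φ(X_1, …, X_n) = h(x)⁻¹ E_x [φ(X_1, …, X_n) h(X_n)]`. -/
structure IsHTransformLaw {S : Type*} [MeasurableSpace S] (h : S → ℝ)
    (Plaw Plawh : S → MeasureTheory.Measure (ℕ → S)) : Prop where
  isProb : ∀ x, 0 < h x → IsProbabilityMeasure (Plawh x)
  start : ∀ x, 0 < h x → Plawh x {ω | ω 0 = x} = 1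
  transform : ∀ x, 0 < h x → ∀ (n : ℕ) (φ : (Fin n → S) → ℝ≥0∞), Measurable φ →
    ∫⁻ ω, φ (fun i => ω (i + 1)) ∂(Plawh x)
      = (ENNReal.ofReal (h x))⁻¹
          * ∫⁻ ω, φ (fun i => ω (i + 1)) * ENNReal.ofReal (h (ω n)) ∂(Plaw x)

/-!
Fubini in the uniform variable: over a path `ω` the section of the event is the interval
`(f ω, h(x)⁻¹]` inside `(0, h(o)⁻¹)`, where `f = 1_{σ < ∞} / h(X_σ)` takes values in `[0, h(x)⁻¹]`,
so the probability is `h(o) (h(x)⁻¹ - E_x^h f)`. Splitting according to the value `n` of `σ`, the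
weight `h(X_n)` of the `h`-transform cancels `1 / h(X_n)` on `{σ = n}`, whence
`E_x^h f = h(x)⁻¹ P_x(σ < ∞)`; the value `σ = 0` is excluded because the chain starts at `x`.
-/

open Set Function

section FirstHit

variable {S : Type*} {B : Set S}

def firstHitAt (B : Set S) (n : ℕ) : Set (ℕ → S) := {ω | ω n ∈ B ∧ ∀ m < n, ω m ∉ B}

-- `{σ = k + 1}` on `{X_0 ∉ B}`, read on `(X_1, …, X_{k+1})`, the coordinates `IsHTransformLaw` sees
def firstHitAtLast (B : Set S) (k : ℕ) : Set (Fin (k + 1) → S) :=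
  {w | w (Fin.last k) ∈ B ∧ ∀ j : Fin k, w j.castSucc ∉ B}

theorem mem_firstHitAt_iff {ω : ℕ → S} {n : ℕ} :
    ω ∈ firstHitAt B n ↔ (∃ i, ω i ∈ B) ∧ sInf {i | ω i ∈ B} = n := by
  constructor
  · rintro ⟨hn, hlt⟩
    refine ⟨⟨n, hn⟩, le_antisymm (Nat.sInf_le hn) ?_⟩
    exact not_lt.1 fun h => hlt _ h (Nat.sInf_mem (s := {i | ω i ∈ B}) ⟨n, hn⟩)
  · rintro ⟨hE, rfl⟩
    exact ⟨Nat.sInf_mem hE, fun m hm hmB => not_le.2 hm (Nat.sInf_le hmB)⟩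

theorem mem_firstHitAt_succ_iff {ω : ℕ → S} {k : ℕ} :
    ω ∈ firstHitAt B (k + 1) ↔
      ω 0 ∉ B ∧ (fun i : Fin (k + 1) => ω (i + 1)) ∈ firstHitAtLast B k := by
  simp only [firstHitAt, firstHitAtLast, mem_ofPred_eq, Fin.val_last, Fin.val_castSucc,
    Nat.forall_lt_succ_left', Fin.forall_iff]
  tauto

theorem iUnion_firstHitAt : ⋃ n, firstHitAt B n = {ω | ∃ i, ω i ∈ B} := by
  ext ω
  simp only [mem_iUnion, mem_firstHitAt_iff, mem_ofPred_eq]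
  exact ⟨fun ⟨_, hE, _⟩ => hE, fun hE => ⟨_, hE, rfl⟩⟩

theorem pairwise_disjoint_firstHitAt : Pairwise (Disjoint on firstHitAt B) :=
  fun _ _ hnm => disjoint_left.2 fun _ hn hm =>
    hnm ((mem_firstHitAt_iff.1 hn).2.symm.trans (mem_firstHitAt_iff.1 hm).2)

theorem indicator_apply_sInf_eq_tsum {M : Type*} [AddCommMonoid M] [TopologicalSpace M]
    (g : S → M) (ω : ℕ → S) :
    {ω | ∃ i, ω i ∈ B}.indicator (fun ω => g (ω (sInf {i | ω i ∈ B}))) ω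
      = ∑' n, (firstHitAt B n).indicator (fun ω => g (ω n)) ω := by
  by_cases hE : ∃ i, ω i ∈ B
  · rw [indicator_of_mem (show ω ∈ {ω | ∃ i, ω i ∈ B} from hE),
      tsum_eq_single (sInf {i | ω i ∈ B}), indicator_of_mem]
    · exact mem_firstHitAt_iff.2 ⟨hE, rfl⟩
    · exact fun n hn => indicator_of_notMem (fun h => hn (mem_firstHitAt_iff.1 h).2.symm) _
  · rw [indicator_of_notMem (show ω ∉ {ω | ∃ i, ω i ∈ B} from hE)]
    have hnone : ∀ n, (firstHitAt B n).indicator (fun ω => g (ω n)) ω = 0 :=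
      fun n => indicator_of_notMem (fun h => hE (mem_firstHitAt_iff.1 h).1) _
    simp [hnone]

theorem indicator_inv_apply_sInf_mem_Icc {h : S → ℝ} {c : ℝ} (hc : 0 < c)
    (hB : ∀ y ∈ B, c < h y) (ω : ℕ → S) :
    {ω | ∃ i, ω i ∈ B}.indicator (fun ω => (h (ω (sInf {i | ω i ∈ B})))⁻¹) ω ∈ Icc 0 c⁻¹ := by
  by_cases hE : ∃ i, ω i ∈ B
  · have hlt : c < h (ω (sInf {i | ω i ∈ B})) := hB _ (Nat.sInf_mem hE)
    rw [indicator_of_mem (show ω ∈ {ω | ∃ i, ω i ∈ B} from hE)]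
    exact ⟨inv_nonneg.2 (hc.trans hlt).le, inv_anti₀ hc hlt.le⟩
  · rw [indicator_of_notMem (show ω ∉ {ω | ∃ i, ω i ∈ B} from hE)]
    exact ⟨le_rfl, inv_nonneg.2 hc.le⟩

variable [MeasurableSpace S]

theorem measurableSet_firstHitAt (hB : MeasurableSet B) (n : ℕ) :
    MeasurableSet (firstHitAt B n) := by
  unfold firstHitAt; measurability

theorem measurableSet_firstHitAtLast (hB : MeasurableSet B) (k : ℕ) :
    MeasurableSet (firstHitAtLast B k) := by
  unfold firstHitAtLast; measurability

theorem measurableSet_setOf_exists_apply_mem (hB : MeasurableSet B) :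
    MeasurableSet {ω : ℕ → S | ∃ i, ω i ∈ B} := by
  rw [← iUnion_firstHitAt]; exact .iUnion (measurableSet_firstHitAt hB)

theorem measurable_sInf_setOf_mem (hB : MeasurableSet B) :
    Measurable fun ω : ℕ → S => sInf {i | ω i ∈ B} := by
  refine measurable_to_countable' fun n => ?_
  -- without a hit, `sInf ∅ = 0`
  have : (fun ω : ℕ → S => sInf {i | ω i ∈ B}) ⁻¹' {n}
      = firstHitAt B n ∪ {ω | ∃ i, ω i ∈ B}ᶜ ∩ {_ω | n = 0} := by
    ext ω
    by_cases hω : ∃ i, ω i ∈ B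
    · simp [mem_firstHitAt_iff, hω]
    · have : {i | ω i ∈ B} = ∅ := eq_empty_of_forall_notMem fun i hi => hω ⟨i, hi⟩
      simp [mem_firstHitAt_iff, hω, this, eq_comm]
  rw [this]
  exact (measurableSet_firstHitAt hB n).union
    ((measurableSet_setOf_exists_apply_mem hB).compl.inter (.const _))

theorem measurable_apply_sInf_setOf_mem (hB : MeasurableSet B) :
    Measurable fun ω : ℕ → S => ω (sInf {i | ω i ∈ B}) :=
  (measurable_from_prod_countable_left (f := fun p : (ℕ → S) × ℕ => p.1 p.2)
    fun n => measurable_pi_apply n).comp (measurable_id.prodMk (measurable_sInf_setOf_mem hB))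

theorem ae_apply_zero_notMem {μ : Measure (ℕ → S)} [IsProbabilityMeasure μ] {x : S}
    (hstart : μ {ω | ω 0 = x} = 1) (hB : MeasurableSet B) (hxB : x ∉ B) :
    ∀ᵐ ω ∂μ, ω 0 ∉ B := by
  refine (ae_iff_measure_eq (measurable_pi_apply 0 hB).compl.nullMeasurableSet).2 ?_
  refine le_antisymm (measure_mono (subset_univ _)) ?_
  rw [measure_univ, ← hstart]
  exact measure_mono fun ω (hω : ω 0 = x) => show ω 0 ∉ B from hω ▸ hxB

end FirstHit

section HTransform

variable {S : Type*} [MeasurableSpace S] {h : S → ℝ} {Plaw Plawh : S → Measure (ℕ → S)}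

theorem IsHTransformLaw.lintegral_indicator_inv_eq (htr : IsHTransformLaw h Plaw Plawh)
    (hmeas : Measurable h) {x : S} (hx : 0 < h x) {n : ℕ} {C : Set (Fin (n + 1) → S)}
    (hC : MeasurableSet C) (hCpos : ∀ w ∈ C, 0 < h (w (Fin.last n))) :
    ∫⁻ ω, {ω | (fun i : Fin (n + 1) => ω (i + 1)) ∈ C}.indicator
        (fun ω => ENNReal.ofReal (h (ω (n + 1)))⁻¹) ω ∂Plawh x
      = (ENNReal.ofReal (h x))⁻¹ * Plaw x {ω | (fun i : Fin (n + 1) => ω (i + 1)) ∈ C} := by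
  set φ : (Fin (n + 1) → S) → ℝ≥0∞ :=
    C.indicator fun w => ENNReal.ofReal (h (w (Fin.last n)))⁻¹
  have hφ : Measurable φ :=
    ((hmeas.comp (measurable_pi_apply _)).inv.ennreal_ofReal).indicator hC
  have hφh : ∀ ω : ℕ → S, φ (fun i => ω (i + 1)) * ENNReal.ofReal (h (ω (n + 1)))
      = {ω | (fun i : Fin (n + 1) => ω (i + 1)) ∈ C}.indicator 1 ω := by
    intro ω
    simp only [φ]
    by_cases hω : (fun i : Fin (n + 1) => ω (i + 1)) ∈ C
    · have hpos : 0 < h (ω (n + 1)) := hCpos _ hω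
      simp [hω, ← ENNReal.ofReal_mul (inv_nonneg.2 hpos.le),
        inv_mul_cancel₀ hpos.ne']
    · simp [hω]
  have hmeasC : MeasurableSet {ω : ℕ → S | (fun i : Fin (n + 1) => ω (i + 1)) ∈ C} :=
    (measurable_pi_lambda _ fun i => measurable_pi_apply _) hC
  calc _ = ∫⁻ ω, φ (fun i => ω (i + 1)) ∂Plawh x := rfl
    _ = _ := by
      rw [htr.transform x hx _ φ hφ]
      simp only [hφh, lintegral_indicator_one hmeasC]

variable {B : Set S} {x : S}

theorem IsHTransformLaw.lintegral_indicator_firstHitAt_inv (htr : IsHTransformLaw h Plaw Plawh)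
    (hmeas : Measurable h) (hB : MeasurableSet B) (hBpos : ∀ y ∈ B, 0 < h y) (hx : 0 < h x)
    (hP : ∀ᵐ ω ∂Plaw x, ω 0 ∉ B) (hPh : ∀ᵐ ω ∂Plawh x, ω 0 ∉ B) (n : ℕ) :
    ∫⁻ ω, (firstHitAt B n).indicator (fun ω => ENNReal.ofReal (h (ω n))⁻¹) ω ∂Plawh x
      = (ENNReal.ofReal (h x))⁻¹ * Plaw x (firstHitAt B n) := by
  cases n with
  | zero =>
    have hnull : ∀ μ : Measure (ℕ → S), (∀ᵐ ω ∂μ, ω 0 ∉ B) → μ (firstHitAt B 0) = 0 :=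
      fun μ hμ => measure_mono_null (fun ω hω => not_not_intro hω.1) (ae_iff.1 hμ)
    rw [lintegral_indicator (measurableSet_firstHitAt hB 0),
      setLIntegral_measure_zero _ _ (hnull _ hPh), hnull _ hP, mul_zero]
  | succ k =>
    have hae : ∀ μ : Measure (ℕ → S), (∀ᵐ ω ∂μ, ω 0 ∉ B) → firstHitAt B (k + 1)
        =ᵐ[μ] {ω | (fun i : Fin (k + 1) => ω (i + 1)) ∈ firstHitAtLast B k} :=
      fun μ hμ => hμ.mono fun ω hω =>
        propext (mem_firstHitAt_succ_iff.trans (and_iff_right hω))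
    rw [lintegral_congr_ae (indicator_ae_eq_of_ae_eq_set (hae _ hPh)), measure_congr (hae _ hP)]
    exact htr.lintegral_indicator_inv_eq hmeas hx (measurableSet_firstHitAtLast hB k)
      fun w hw => hBpos _ hw.1

theorem IsHTransformLaw.lintegral_indicator_inv_apply_sInf
    (htr : IsHTransformLaw h Plaw Plawh)
    (hmeas : Measurable h) (hB : MeasurableSet B) (hBpos : ∀ y ∈ B, 0 < h y) (hx : 0 < h x)
    (hP : ∀ᵐ ω ∂Plaw x, ω 0 ∉ B) (hPh : ∀ᵐ ω ∂Plawh x, ω 0 ∉ B) :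
    ∫⁻ ω, {ω | ∃ i, ω i ∈ B}.indicator
        (fun ω => ENNReal.ofReal (h (ω (sInf {i | ω i ∈ B})))⁻¹) ω ∂Plawh x
      = (ENNReal.ofReal (h x))⁻¹ * Plaw x {ω | ∃ i, ω i ∈ B} := by
  simp_rw [indicator_apply_sInf_eq_tsum fun y => ENNReal.ofReal (h y)⁻¹]
  rw [lintegral_tsum fun n =>
      ((by fun_prop : Measurable fun ω : ℕ → S => ENNReal.ofReal (h (ω n))⁻¹).indicator
        (measurableSet_firstHitAt hB n)).aemeasurable, ← iUnion_firstHitAt,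
    measure_iUnion pairwise_disjoint_firstHitAt (measurableSet_firstHitAt hB),
    ← ENNReal.tsum_mul_left]
  exact tsum_congr (htr.lintegral_indicator_firstHitAt_inv hmeas hB hBpos hx hP hPh)

end HTransform

theorem volume_Ioc_inter_Ioo {a c b : ℝ} (ha : 0 ≤ a) (hcb : c ≤ b) :
    volume (Ioc a c ∩ Ioo 0 b) = ENNReal.ofReal (c - a) := by
  refine le_antisymm ((measure_mono inter_subset_left).trans_eq Real.volume_Ioc) ?_
  rw [← Real.volume_Ioo]
  exact measure_mono fun u hu => ⟨Ioo_subset_Ioc_self hu, ha.trans_lt hu.1, hu.2.trans_le hcb⟩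

theorem prod_restrict_Ioo_setOf_lt_le {Ω : Type*} [MeasurableSpace Ω] (μ : Measure Ω)
    [IsProbabilityMeasure μ] {f : Ω → ℝ} (hf : Measurable f) {d b : ℝ}
    (hfd : ∀ ω, f ω ∈ Icc 0 d) (hdb : d ≤ b) :
    (μ.prod (volume.restrict (Ioo 0 b))) {p | f p.1 < p.2 ∧ p.2 ≤ d}
      = ENNReal.ofReal d - ∫⁻ ω, ENNReal.ofReal (f ω) ∂μ := by
  have hA : MeasurableSet {p : Ω × ℝ | f p.1 < p.2 ∧ p.2 ≤ d} :=
    (measurableSet_lt (hf.comp measurable_fst) measurable_snd).inter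
      (measurableSet_le measurable_snd measurable_const)
  have hsection : ∀ ω, volume.restrict (Ioo 0 b) (Prod.mk ω ⁻¹' {p | f p.1 < p.2 ∧ p.2 ≤ d})
      = ENNReal.ofReal d - ENNReal.ofReal (f ω) := fun ω => by
    rw [← ENNReal.ofReal_sub _ (hfd ω).1, ← volume_Ioc_inter_Ioo (hfd ω).1 hdb]
    exact Measure.restrict_apply (t := Ioc (f ω) d) measurableSet_Ioc
  have hle : ∀ ω, ENNReal.ofReal (f ω) ≤ ENNReal.ofReal d :=
    fun ω => ENNReal.ofReal_le_ofReal (hfd ω).2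
  have hfin : ∫⁻ ω, ENNReal.ofReal (f ω) ∂μ ≠ ⊤ :=
    ((lintegral_mono hle).trans_lt (by simp)).ne
  rw [Measure.prod_apply hA, lintegral_congr hsection,
    lintegral_sub hf.ennreal_ofReal hfin (.of_forall hle), lintegral_const, measure_univ, mul_one]

theorem uniform_between_identity_general {S : Type*} [MeasurableSpace S]
    (P : ProbabilityTheory.Kernel S S)
    (Plaw Plawh : S → MeasureTheory.Measure (ℕ → S))
    (hlaw : ∀ x, IsMarkovChainLawAt P (Plaw x) x)
    (h : S → ℝ) (hmeas : Measurable h)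
    (htr : IsHTransformLaw h Plaw Plawh)
    (o x : S) (ho : 0 < h o) (hox : h o ≤ h x) :
    ((Plawh x).prod
        (ENNReal.ofReal (h o) • MeasureTheory.volume.restrict (Set.Ioo (0 : ℝ) (h o)⁻¹)))
      {p : (ℕ → S) × ℝ |
        Set.indicator {ω : ℕ → S | ∃ i, h x < h (ω i)}
            (fun ω => (h (ω (sInf {i | h x < h (ω i)})))⁻¹) p.1 < p.2
          ∧ p.2 ≤ (h x)⁻¹}
      = ENNReal.ofReal (h o / h x) * Plaw x {ω | ∀ i, h (ω i) ≤ h x} := by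
  have hx : 0 < h x := ho.trans_le hox
  have := htr.isProb x hx
  have := (hlaw x).isProb
  set f := {ω : ℕ → S | ∃ i, h x < h (ω i)}.indicator
    fun ω => (h (ω (sInf {i | h x < h (ω i)})))⁻¹
  set B := {y | h x < h y}
  have hB : MeasurableSet B := hmeas measurableSet_Ioi
  have hxB : x ∉ B := (lt_irrefl (h x) ·)
  have hf : Measurable f := (hmeas.comp (measurable_apply_sInf_setOf_mem hB)).inv.indicator
    (measurableSet_setOf_exists_apply_mem hB)
  have hf_ofReal : ∀ ω, ENNReal.ofReal (f ω) = {ω : ℕ → S | ∃ i, ω i ∈ B}.indicator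
      (fun ω => ENNReal.ofReal (h (ω (sInf {i | ω i ∈ B})))⁻¹) ω :=
    fun ω => (congrFun (indicator_comp_of_zero ENNReal.ofReal_zero) ω).symm
  have hq : Plaw x {ω | ∀ i, h (ω i) ≤ h x} = 1 - Plaw x {ω | ∃ i, ω i ∈ B} := by
    rw [← prob_compl_eq_one_sub (measurableSet_setOf_exists_apply_mem hB)]
    congr 1; ext; simp [B]
  rw [Measure.prod_smul_right, Measure.smul_apply, smul_eq_mul,
    prod_restrict_Ioo_setOf_lt_le _ hf
      (indicator_inv_apply_sInf_mem_Icc hx fun _ hy => hy) (inv_anti₀ ho hox),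
    lintegral_congr hf_ofReal,
    htr.lintegral_indicator_inv_apply_sInf hmeas hB (fun _ hy => hx.trans hy) hx
      (ae_apply_zero_notMem (hlaw x).start hB hxB) (ae_apply_zero_notMem (htr.start x hx) hB hxB)]
  rw [hq, ← ENNReal.ofReal_inv_of_pos hx, div_eq_mul_inv, ENNReal.ofReal_mul ho.le, mul_assoc,
    ENNReal.mul_sub (b := 1) fun _ _ => ENNReal.ofReal_ne_top, mul_one]

/-- Lemma 6, second identity: for harmonic `h` with `0 < h(o) ≤ h(x)`, `U` uniform on
`(0, h(o)⁻¹)` independent of the chain under `P_x^h`, and `σ = inf{i : h(X_i) > h(x)}`,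
`P_x^h( h(X_σ)⁻¹ 1_{σ < ∞} < U ≤ h(x)⁻¹ ) = (h(o)/h(x)) · q_{h(x)}(x)`,
where `q_{h(x)}(x) = P_x(h(X_i) ≤ h(x) ∀ i)`. -/
theorem uniform_between_identity {S : Type*} [MeasurableSpace S]
    (P : ProbabilityTheory.Kernel S S) [IsMarkovKernel P]
    (Plaw Plawh : S → MeasureTheory.Measure (ℕ → S))
    (hlaw : ∀ x, IsMarkovChainLawAt P (Plaw x) x)
    (h : S → ℝ) (hmeas : Measurable h) (hnonneg : ∀ y, 0 ≤ h y)
    (hharm : Harmonic P h)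
    (htr : IsHTransformLaw h Plaw Plawh)
    (o x : S) (ho : 0 < h o) (hox : h o ≤ h x) :
    ((Plawh x).prod
        (ENNReal.ofReal (h o) • MeasureTheory.volume.restrict (Set.Ioo (0 : ℝ) (h o)⁻¹)))
      {p : (ℕ → S) × ℝ |
        Set.indicator {ω : ℕ → S | ∃ i, h x < h (ω i)}
            (fun ω => (h (ω (sInf {i | h x < h (ω i)})))⁻¹) p.1 < p.2
          ∧ p.2 ≤ (h x)⁻¹}
      = ENNReal.ofReal (h o / h x) * Plaw x {ω | ∀ i, h (ω i) ≤ h x} :=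
  uniform_between_identity_general P Plaw Plawh hlaw h hmeas htr o x ho hox
end

section
/- If h is a minimal nonnegative harmonic function for P (i.e., every harmonic k with 0 ≤ k ≤ h equals c·h for some constant c ∈ [0,1]), then for every x ∈ S^h = {h > 0}, h(X_n) → sup h, P_x^h-almost surely. -/
open MeasureTheory ProbabilityTheory ENNReal Filter

/-
Fix `q < sup h` and `C = {h ≤ q}`. For the Doob kernel `P^h`, the probability `u z` of visiting
`C` infinitely often is `P^h`-invariant, so `h * u` is a harmonic minorant of `h`, and minimality
makes `u` a constant `c` on `{h > 0}`. At a point with `h z > q` we have `h z * u z ≤ q`, since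
`h z * P^h_z(hit C)` is the `P_z`-expectation of `h` at the hitting time of `C`; so `c < 1`.
The Markov property turns this into `P(A ∩ {X visits C i.o.}) = c * P(A)` for every cylinder `A`,
and since cylinders generate, `P(X visits C i.o.) = c * P(X visits C i.o.)`, i.e. it is `0`.
Thus `h(X_n)` eventually exceeds every `q < sup h`.
-/

lemma MeasureTheory.lintegral_indicator_one_mul {α : Type*} [MeasurableSpace α] {μ : Measure α}
    {A : Set α} (hA : MeasurableSet A) (f : α → ℝ≥0∞) :
    ∫⁻ a, A.indicator 1 a * f a ∂μ = ∫⁻ a in A, f a ∂μ := by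
  rw [← lintegral_indicator hA]
  congr with a
  by_cases ha : a ∈ A <;> simp [ha]

lemma MeasureTheory.measure_eq_zero_of_forall_inter_eq_mul {α : Type*} [mα : MeasurableSpace α]
    {μ : Measure α} [IsFiniteMeasure μ] {𝒞 : Set (Set α)} (hgen : mα = .generateFrom 𝒞)
    (hpi : IsPiSystem 𝒞) (huniv : Set.univ ∈ 𝒞) {E : Set α} (hE : MeasurableSet E)
    {c : ℝ≥0∞} (hc : c < 1) (h : ∀ A ∈ 𝒞, μ (A ∩ E) = c * μ A) : μ E = 0 := by
  have hrestrict : μ.restrict E = c • μ := by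
    refine ext_of_generate_finite 𝒞 hgen hpi (fun A hA => ?_) ?_
    · rw [Measure.restrict_apply' hE, h A hA, Measure.smul_apply, smul_eq_mul]
    · rw [Measure.restrict_apply' hE, h _ huniv, Measure.smul_apply, smul_eq_mul]
  have hfix : μ E = c * μ E := by
    simpa [Measure.restrict_apply' hE] using congrArg (· E) hrestrict
  by_contra hne
  have := ENNReal.mul_lt_mul_right hne (measure_ne_top μ E) hc
  rw [mul_one, mul_comm, ← hfix] at this
  exact this.false

lemma setOf_frequently_eq_iInter {S : Type*} (C : Set S) (m : ℕ) :
    {ω : ℕ → S | ∃ᶠ k in atTop, ω k ∈ C} = ⋂ j, {ω : ℕ → S | ∃ i, ω (m + j + i) ∈ C} := by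
  ext ω
  simp only [Set.mem_iInter, Set.mem_ofPred_eq, frequently_atTop]
  constructor
  · intro h j
    obtain ⟨k, hk, hkC⟩ := h (m + j)
    exact ⟨k - (m + j), by rwa [Nat.add_sub_cancel' hk]⟩
  · intro h a
    obtain ⟨i, hi⟩ := h a
    exact ⟨m + a + i, by omega, hi⟩

lemma indicator_setOf_exists_le_succ {S : Type*} (C : Set S) (n N : ℕ) (ω : ℕ → S) :
    ({ω : ℕ → S | ∃ j ≤ N + 1, ω (n + j) ∈ C}.indicator 1 ω : ℝ≥0∞)
      = C.indicator 1 (ω n)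
        + Cᶜ.indicator 1 (ω n) * {ω : ℕ → S | ∃ j ≤ N, ω (n + 1 + j) ∈ C}.indicator 1 ω := by
  by_cases hn : ω n ∈ C
  · have hmem : ω ∈ {ω : ℕ → S | ∃ j ≤ N + 1, ω (n + j) ∈ C} := ⟨0, by omega, hn⟩
    simp [hn, hmem]
  have hshift : ω ∈ {ω : ℕ → S | ∃ j ≤ N + 1, ω (n + j) ∈ C}
      ↔ ω ∈ {ω : ℕ → S | ∃ j ≤ N, ω (n + 1 + j) ∈ C} := by
    constructor
    · rintro ⟨_ | j, hj, hjC⟩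
      · exact absurd hjC hn
      · exact ⟨j, by omega, by convert hjC using 2; omega⟩
    · rintro ⟨j, hj, hjC⟩
      exact ⟨j + 1, by omega, by convert hjC using 2; omega⟩
  rw [Set.indicator_of_notMem hn, Set.indicator_of_mem (Set.mem_compl hn), zero_add,
    Pi.one_apply, one_mul]
  by_cases h2 : ω ∈ {ω : ℕ → S | ∃ j ≤ N, ω (n + 1 + j) ∈ C}
  · rw [Set.indicator_of_mem h2, Set.indicator_of_mem (hshift.2 h2)]
  · rw [Set.indicator_of_notMem h2, Set.indicator_of_notMem (mt hshift.1 h2)]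

namespace ProbabilityTheory.Kernel

section HitProb

variable {S : Type*} [MeasurableSpace S] (κ : Kernel S S) (C : Set S)

/- For a sub-Markov kernel `κ`: the probabilities that the chain started at `z` visits `C` at some
time `≤ N`, at some time, at some time `≥ j`, and infinitely often. They are defined through the
first-step recursion, so no path measure is involved. -/

noncomputable def hitProbWithin : ℕ → S → ℝ≥0∞
  | 0 => C.indicator 1
  | N + 1 => fun z => C.indicator 1 z + Cᶜ.indicator 1 z * ∫⁻ y, hitProbWithin N y ∂κ z

noncomputable def hitProb (z : S) : ℝ≥0∞ := ⨆ N, hitProbWithin κ C N z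

noncomputable def hitProbAfter : ℕ → S → ℝ≥0∞
  | 0 => hitProb κ C
  | j + 1 => fun z => ∫⁻ y, hitProbAfter j y ∂κ z

noncomputable def hitProbInfOften (z : S) : ℝ≥0∞ := ⨅ j, hitProbAfter κ C j z

variable {κ C}

lemma hitProbWithin_of_mem (N : ℕ) {z : S} (hz : z ∈ C) : hitProbWithin κ C N z = 1 := by
  cases N <;> simp [hitProbWithin, hz]

lemma hitProbWithin_succ_of_notMem (N : ℕ) {z : S} (hz : z ∉ C) :
    hitProbWithin κ C (N + 1) z = ∫⁻ y, hitProbWithin κ C N y ∂κ z := by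
  simp [hitProbWithin, hz]

lemma measurable_hitProbWithin (hC : MeasurableSet C) (N : ℕ) :
    Measurable (hitProbWithin κ C N) := by
  induction N with
  | zero => exact measurable_one.indicator hC
  | succ N ih =>
    exact (measurable_one.indicator hC).add
      ((measurable_one.indicator hC.compl).mul ih.lintegral_kernel)

lemma monotone_hitProbWithin : Monotone (hitProbWithin κ C) := by
  refine monotone_nat_of_le_succ fun N => ?_
  induction N with
  | zero => exact fun z => le_self_add
  | succ N ih => exact fun z => by dsimp only [hitProbWithin]; gcongr; exact ih _

lemma measurable_hitProb (hC : MeasurableSet C) : Measurable (hitProb κ C) :=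
  .iSup fun N => measurable_hitProbWithin hC N

lemma measurable_hitProbAfter (hC : MeasurableSet C) (j : ℕ) :
    Measurable (hitProbAfter κ C j) := by
  induction j with
  | zero => exact measurable_hitProb hC
  | succ j ih => exact ih.lintegral_kernel

lemma measurable_hitProbInfOften (hC : MeasurableSet C) : Measurable (hitProbInfOften κ C) :=
  .iInf fun j => measurable_hitProbAfter hC j

lemma hitProbInfOften_le_hitProb (z : S) : hitProbInfOften κ C z ≤ hitProb κ C z :=
  iInf_le (fun j => hitProbAfter κ C j z) 0

variable (hκ : ∀ z, κ z Set.univ ≤ 1)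
include hκ

lemma lintegral_le_one {g : S → ℝ≥0∞} (hg : ∀ y, g y ≤ 1) (z : S) : ∫⁻ y, g y ∂κ z ≤ 1 :=
  calc ∫⁻ y, g y ∂κ z ≤ ∫⁻ _, 1 ∂κ z := lintegral_mono hg
    _ ≤ 1 := by simpa using hκ z

lemma hitProbWithin_le_one (N : ℕ) (z : S) : hitProbWithin κ C N z ≤ 1 := by
  induction N generalizing z with
  | zero => exact Set.indicator_le_self' (fun _ _ => zero_le_one) z
  | succ N ih =>
    by_cases hz : z ∈ C
    · rw [hitProbWithin_of_mem _ hz]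
    · rw [hitProbWithin_succ_of_notMem N hz]; exact lintegral_le_one hκ ih z

lemma lintegral_hitProbWithin_le_succ (N : ℕ) (z : S) :
    ∫⁻ y, hitProbWithin κ C N y ∂κ z ≤ hitProbWithin κ C (N + 1) z := by
  by_cases hz : z ∈ C
  · rw [hitProbWithin_of_mem _ hz]; exact lintegral_le_one hκ (hitProbWithin_le_one hκ N) z
  · rw [hitProbWithin_succ_of_notMem N hz]

lemma hitProb_le_one (z : S) : hitProb κ C z ≤ 1 :=
  iSup_le fun N => hitProbWithin_le_one hκ N z

lemma lintegral_hitProb_le (hC : MeasurableSet C) (z : S) :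
    ∫⁻ y, hitProb κ C y ∂κ z ≤ hitProb κ C z := by
  simp only [hitProb]
  rw [lintegral_iSup (measurable_hitProbWithin hC) monotone_hitProbWithin]
  exact iSup_le fun N => (lintegral_hitProbWithin_le_succ hκ N z).trans
    (le_iSup (hitProbWithin κ C · z) (N + 1))

lemma antitone_hitProbAfter (hC : MeasurableSet C) : Antitone (hitProbAfter κ C) := by
  refine antitone_nat_of_succ_le fun j => ?_
  induction j with
  | zero => exact lintegral_hitProb_le hκ hC
  | succ j ih => exact fun z => lintegral_mono (ih ·)

lemma hitProbAfter_le_one (hC : MeasurableSet C) (j : ℕ) (z : S) : hitProbAfter κ C j z ≤ 1 :=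
  (antitone_hitProbAfter hκ hC (Nat.zero_le j) z).trans (hitProb_le_one hκ z)

lemma lintegral_hitProbInfOften (hC : MeasurableSet C) (z : S) :
    ∫⁻ y, hitProbInfOften κ C y ∂κ z = hitProbInfOften κ C z := by
  have hfin : ∫⁻ y, hitProbAfter κ C 0 y ∂κ z ≠ ∞ :=
    ne_top_of_le_ne_top one_ne_top (lintegral_le_one hκ (hitProbAfter_le_one hκ hC 0) z)
  simp only [hitProbInfOften]
  rw [lintegral_iInf (measurable_hitProbAfter hC) (antitone_hitProbAfter hκ hC) hfin]
  exact Antitone.iInf_nat_add (f := fun j => hitProbAfter κ C j z)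
    (fun _ _ hij => antitone_hitProbAfter hκ hC hij z) 1

end HitProb

section Doob

variable {S : Type*} [MeasurableSpace S] {P : Kernel S S} {h : S → ℝ}

/- Where `h x = 0` the density is `∞` on `{h > 0}`, which is `P x`-null when `h ≥ 0` is harmonic;
so `doobTransform P h x = 0` there. -/
noncomputable def doobTransform (P : Kernel S S) [IsSFiniteKernel P] (h : S → ℝ) : Kernel S S :=
  P.withDensity fun x y => ENNReal.ofReal (h y) / ENNReal.ofReal (h x)

lemma lintegral_doobTransform [IsSFiniteKernel P] (hmeas : Measurable h) {g : S → ℝ≥0∞}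
    (hg : Measurable g) (z : S) :
    ∫⁻ y, g y ∂doobTransform P h z
      = (∫⁻ y, ENNReal.ofReal (h y) * g y ∂P z) / ENNReal.ofReal (h z) := by
  rw [doobTransform, Kernel.lintegral_withDensity _ (by fun_prop) z hg]
  simp_rw [div_eq_mul_inv, mul_right_comm _ _ (g _)]
  exact lintegral_mul_const _ (hmeas.ennreal_ofReal.mul hg)

lemma lintegral_ofReal_of_harmonic (hnonneg : ∀ y, 0 ≤ h y) (hharm : Harmonic P h) (z : S) :
    ∫⁻ y, ENNReal.ofReal (h y) ∂P z = ENNReal.ofReal (h z) := by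
  rw [← ofReal_integral_eq_lintegral_ofReal (hharm z).1 (ae_of_all _ hnonneg), ← (hharm z).2]

variable [IsMarkovKernel P] (hmeas : Measurable h) (hnonneg : ∀ y, 0 ≤ h y)
  (hharm : Harmonic P h)
include hmeas hnonneg hharm

lemma ofReal_mul_lintegral_doobTransform {g : S → ℝ≥0∞} (hg : Measurable g) (z : S) :
    ENNReal.ofReal (h z) * ∫⁻ y, g y ∂doobTransform P h z
      = ∫⁻ y, ENNReal.ofReal (h y) * g y ∂P z := by
  rw [lintegral_doobTransform hmeas hg]
  rcases (hnonneg z).eq_or_lt with hz | hz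
  · have hae : ∀ᵐ y ∂P z, ENNReal.ofReal (h y) = 0 :=
      (lintegral_eq_zero_iff hmeas.ennreal_ofReal).1
        (by rw [lintegral_ofReal_of_harmonic hnonneg hharm, ← hz, ENNReal.ofReal_zero])
    rw [← hz, ENNReal.ofReal_zero, zero_mul,
      lintegral_congr_ae (hae.mono fun y hy => by rw [hy, zero_mul]), lintegral_zero]
  · exact ENNReal.mul_div_cancel (ENNReal.ofReal_pos.2 hz).ne' ENNReal.ofReal_ne_top

lemma doobTransform_apply_univ_le_one (z : S) : doobTransform P h z Set.univ ≤ 1 := by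
  rw [← lintegral_one, lintegral_doobTransform hmeas (g := fun _ => 1) measurable_const]
  simp [lintegral_ofReal_of_harmonic hnonneg hharm]

omit hnonneg hharm in
lemma doobTransform_apply_setOf_nonpos (z : S) : doobTransform P h z {y | h y ≤ 0} = 0 := by
  have hT : MeasurableSet {y | h y ≤ 0} := measurableSet_le hmeas measurable_const
  rw [← lintegral_indicator_one hT, lintegral_doobTransform hmeas (measurable_one.indicator hT)]
  have hzero : ∀ y, ENNReal.ofReal (h y) * {y | h y ≤ 0}.indicator 1 y = 0 := fun y => by
    by_cases hy : h y ≤ 0 <;> simp [hy, ENNReal.ofReal_eq_zero.2]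
  simp [hzero]

lemma ofReal_mul_hitProb_doobTransform_le {C : Set S} (hC : MeasurableSet C)
    {t : ℝ} (hCt : ∀ y ∈ C, h y ≤ t) (z : S) :
    ENNReal.ofReal (h z) * (doobTransform P h).hitProb C z ≤ ENNReal.ofReal t := by
  have hmem : ∀ N, ∀ y ∈ C, ENNReal.ofReal (h y) * (doobTransform P h).hitProbWithin C N y
      ≤ ENNReal.ofReal t := fun N y hy => by
    rw [hitProbWithin_of_mem N hy, mul_one]
    exact ENNReal.ofReal_le_ofReal (hCt y hy)
  have hwithin : ∀ N z, ENNReal.ofReal (h z) * (doobTransform P h).hitProbWithin C N z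
      ≤ ENNReal.ofReal t := by
    intro N
    induction N with
    | zero =>
      intro z
      by_cases hz : z ∈ C
      · exact hmem 0 z hz
      · simp [hitProbWithin, hz]
    | succ N ih =>
      intro z
      by_cases hz : z ∈ C
      · exact hmem _ z hz
      rw [hitProbWithin_succ_of_notMem N hz,
        ofReal_mul_lintegral_doobTransform hmeas hnonneg hharm (measurable_hitProbWithin hC N)]
      calc ∫⁻ y, ENNReal.ofReal (h y) * (doobTransform P h).hitProbWithin C N y ∂P z
          ≤ ∫⁻ _, ENNReal.ofReal t ∂P z := lintegral_mono ih
        _ = ENNReal.ofReal t := by simp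
  rw [hitProb, ENNReal.mul_iSup]
  exact iSup_le fun N => hwithin N z

lemma hitProb_doobTransform_lt_one {C : Set S} (hC : MeasurableSet C) {t : ℝ}
    (hCt : ∀ y ∈ C, h y ≤ t) {z : S} (hz : ENNReal.ofReal t < ENNReal.ofReal (h z)) :
    (doobTransform P h).hitProb C z < 1 := by
  by_contra! hone
  exact (hz.trans_le (le_mul_of_one_le_right' hone)).not_ge
    (ofReal_mul_hitProb_doobTransform_le hmeas hnonneg hharm hC hCt z)

lemma exists_eq_const_of_lintegral_doobTransform_eq
    (hmin : ∀ k : S → ℝ, Measurable k → (∀ y, 0 ≤ k y) → (∀ y, k y ≤ h y) →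
      Harmonic P k → ∃ c ∈ Set.Icc (0 : ℝ) 1, ∀ y, k y = c * h y)
    {u : S → ℝ≥0∞} (hu : Measurable u) (hu1 : ∀ z, u z ≤ 1)
    (hinv : ∀ z, ∫⁻ y, u y ∂doobTransform P h z = u z) :
    ∃ c, ∀ z, 0 < h z → u z = c := by
  set k := fun z => h z * (u z).toReal
  have hu_top : ∀ z, u z ≠ ∞ := fun z => ne_top_of_le_ne_top one_ne_top (hu1 z)
  have hk_ofReal : ∀ z, ENNReal.ofReal (k z) = ENNReal.ofReal (h z) * u z := fun z => by
    rw [ENNReal.ofReal_mul (hnonneg z), ENNReal.ofReal_toReal (hu_top z)]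
  have hk_nonneg : ∀ z, 0 ≤ k z := fun z => mul_nonneg (hnonneg z) ENNReal.toReal_nonneg
  have hk_le : ∀ z, k z ≤ h z := fun z =>
    mul_le_of_le_one_right (hnonneg z)
      (ENNReal.toReal_le_of_le_ofReal zero_le_one (by simpa using hu1 z))
  have hk_meas : Measurable k := hmeas.mul hu.ennreal_toReal
  have hk_harm : Harmonic P k := fun z => by
    refine ⟨((hharm z).1.mono' hk_meas.aestronglyMeasurable (ae_of_all _ fun y => ?_)), ?_⟩
    · rw [Real.norm_eq_abs, abs_of_nonneg (hk_nonneg y)]; exact hk_le y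
    rw [integral_eq_lintegral_of_nonneg_ae (ae_of_all _ hk_nonneg) hk_meas.aestronglyMeasurable]
    simp_rw [hk_ofReal]
    rw [← ofReal_mul_lintegral_doobTransform hmeas hnonneg hharm hu, hinv, ← hk_ofReal,
      ENNReal.toReal_ofReal (hk_nonneg z)]
  obtain ⟨c, -, hc⟩ := hmin k hk_meas hk_nonneg hk_le hk_harm
  refine ⟨ENNReal.ofReal c, fun z hz => ?_⟩
  have hcz : (u z).toReal = c := mul_left_cancel₀ hz.ne' ((hc z).trans (mul_comm c (h z)))
  rw [← hcz, ENNReal.ofReal_toReal (hu_top z)]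

end Doob

end ProbabilityTheory.Kernel

section MarkovChain

variable {S : Type*} [MeasurableSpace S]

lemma DependsOn.exists_measurable_prefix {β : Type*} [MeasurableSpace β] {Φ : (ℕ → S) → β}
    {n : ℕ} (hΦ : Measurable Φ) (hΦn : DependsOn Φ (Set.Iic n)) :
    ∃ F : (Fin (n + 1) → S) → β, Measurable F ∧ ∀ ω, Φ ω = F (fun i => ω i) := by
  refine ⟨fun v => Φ (fun k => if hk : k < n + 1 then v ⟨k, hk⟩ else v 0), hΦ.comp ?_,
    fun ω => hΦn fun k hk => ?_⟩
  · refine measurable_pi_lambda _ fun k => ?_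
    split_ifs
    all_goals exact measurable_pi_apply _
  · simp [Nat.lt_succ_of_le hk]

namespace IsMarkovChainLawAt

variable {κ : Kernel S S} {μ : Measure (ℕ → S)} {x : S} (hμ : IsMarkovChainLawAt κ μ x)
include hμ

lemma lintegral_mul_succ {Φ : (ℕ → S) → ℝ≥0∞} {n : ℕ} (hΦ : Measurable Φ)
    (hΦn : DependsOn Φ (Set.Iic n)) {g : S → ℝ≥0∞} (hg : Measurable g) :
    ∫⁻ ω, Φ ω * g (ω (n + 1)) ∂μ = ∫⁻ ω, Φ ω * ∫⁻ y, g y ∂κ (ω n) ∂μ := by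
  obtain ⟨F, hF, hΦF⟩ := hΦn.exists_measurable_prefix hΦ
  simp_rw [hΦF]
  exact hμ.markov n F g hF hg

lemma ae_notMem {T : Set S} (hT : MeasurableSet T) (hx : x ∉ T) (hκT : ∀ z, κ z T = 0)
    (n : ℕ) : ∀ᵐ ω ∂μ, ω n ∉ T := by
  have := hμ.isProb
  have hTn : MeasurableSet {ω : ℕ → S | ω n ∈ T} := measurable_pi_apply n hT
  rw [ae_iff]
  simp only [not_not]
  cases n with
  | zero =>
    have h1 : μ {ω : ℕ → S | ω 0 ∈ T}ᶜ = 1 :=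
      le_antisymm prob_le_one (hμ.start ▸ measure_mono fun ω (hω : ω 0 = x) h0 => hx (hω ▸ h0))
    simpa using (prob_compl_eq_zero_iff hTn.compl).2 h1
  | succ n =>
    have h := hμ.markov n (fun _ => 1) (T.indicator 1) measurable_const
      (measurable_one.indicator hT)
    simp only [one_mul, lintegral_indicator_one hT, hκT, lintegral_zero] at h
    rwa [← lintegral_indicator_one hTn]

lemma lintegral_mul_indicator_hitWithin {C : Set S} (hC : MeasurableSet C) (N : ℕ) :
    ∀ (n : ℕ) {Φ : (ℕ → S) → ℝ≥0∞}, Measurable Φ → DependsOn Φ (Set.Iic n) →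
      ∫⁻ ω, Φ ω * {ω : ℕ → S | ∃ j ≤ N, ω (n + j) ∈ C}.indicator 1 ω ∂μ
        = ∫⁻ ω, Φ ω * κ.hitProbWithin C N (ω n) ∂μ := by
  induction N with
  | zero =>
    intro n Φ _ _
    simp only [nonpos_iff_eq_zero, exists_eq_left, add_zero, Kernel.hitProbWithin]
    rfl
  | succ N ih =>
    intro n Φ hΦ hΦn
    set Ψ := fun ω : ℕ → S => Φ ω * Cᶜ.indicator 1 (ω n)
    have hΨ : Measurable Ψ :=
      hΦ.mul ((measurable_one.indicator hC.compl).comp (measurable_pi_apply n))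
    have hΨn : DependsOn Ψ (Set.Iic n) := fun ω ω' h => by
      simp only [Ψ]
      rw [hΦn h, h n (Set.mem_Iic.2 le_rfl)]
    have hΦC : Measurable fun ω : ℕ → S => Φ ω * C.indicator 1 (ω n) :=
      hΦ.mul ((measurable_one.indicator hC).comp (measurable_pi_apply n))
    calc ∫⁻ ω, Φ ω * {ω : ℕ → S | ∃ j ≤ N + 1, ω (n + j) ∈ C}.indicator 1 ω ∂μ
        = ∫⁻ ω, Φ ω * C.indicator 1 (ω n) ∂μ
          + ∫⁻ ω, Ψ ω * {ω : ℕ → S | ∃ j ≤ N, ω (n + 1 + j) ∈ C}.indicator 1 ω ∂μ := by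
          simp_rw [indicator_setOf_exists_le_succ, mul_add, ← mul_assoc]
          exact lintegral_add_left hΦC _
      _ = ∫⁻ ω, Φ ω * C.indicator 1 (ω n) ∂μ
          + ∫⁻ ω, Ψ ω * κ.hitProbWithin C N (ω (n + 1)) ∂μ := by
          rw [ih (n + 1) hΨ (hΨn.mono (Set.Iic_subset_Iic.2 n.le_succ))]
      _ = ∫⁻ ω, Φ ω * C.indicator 1 (ω n) ∂μ
          + ∫⁻ ω, Ψ ω * ∫⁻ y, κ.hitProbWithin C N y ∂κ (ω n) ∂μ := by
          rw [hμ.lintegral_mul_succ hΨ hΨn (Kernel.measurable_hitProbWithin hC N)]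
      _ = ∫⁻ ω, Φ ω * κ.hitProbWithin C (N + 1) (ω n) ∂μ := by
          simp_rw [Kernel.hitProbWithin, mul_add, Ψ, ← mul_assoc]
          exact (lintegral_add_left hΦC _).symm

lemma lintegral_mul_indicator_hitFrom {C : Set S} (hC : MeasurableSet C) (n : ℕ)
    {Φ : (ℕ → S) → ℝ≥0∞} (hΦ : Measurable Φ) (hΦn : DependsOn Φ (Set.Iic n)) :
    ∫⁻ ω, Φ ω * {ω : ℕ → S | ∃ j, ω (n + j) ∈ C}.indicator 1 ω ∂μ
      = ∫⁻ ω, Φ ω * κ.hitProb C (ω n) ∂μ := by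
  have hunion : {ω : ℕ → S | ∃ j, ω (n + j) ∈ C}
      = ⋃ N, {ω : ℕ → S | ∃ j ≤ N, ω (n + j) ∈ C} := by
    ext ω
    simp only [Set.mem_iUnion, Set.mem_ofPred_eq]
    exact ⟨fun ⟨j, hj⟩ => ⟨j, j, le_rfl, hj⟩, fun ⟨_, j, _, hj⟩ => ⟨j, hj⟩⟩
  have hwindow_meas : ∀ N, Measurable fun ω : ℕ → S =>
      Φ ω * {ω : ℕ → S | ∃ j ≤ N, ω (n + j) ∈ C}.indicator 1 ω := fun N =>
    hΦ.mul (measurable_one.indicator (by measurability))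
  have hwindow_mono : Monotone fun N (ω : ℕ → S) =>
      Φ ω * {ω : ℕ → S | ∃ j ≤ N, ω (n + j) ∈ C}.indicator 1 ω := fun N N' hN ω => by
    have hsub : {ω : ℕ → S | ∃ j ≤ N, ω (n + j) ∈ C} ⊆ {ω : ℕ → S | ∃ j ≤ N', ω (n + j) ∈ C} :=
      fun _ ⟨j, hj, hjC⟩ => ⟨j, hj.trans hN, hjC⟩
    exact mul_le_mul_right (Set.indicator_le_indicator_of_subset hsub (fun _ => zero_le) ω) _
  calc ∫⁻ ω, Φ ω * {ω : ℕ → S | ∃ j, ω (n + j) ∈ C}.indicator 1 ω ∂μ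
      = ∫⁻ ω, ⨆ N, Φ ω * {ω : ℕ → S | ∃ j ≤ N, ω (n + j) ∈ C}.indicator 1 ω ∂μ := by
        rw [hunion]
        simp_rw [Set.indicator_iUnion_apply ENNReal.bot_eq_zero, ENNReal.mul_iSup]
    _ = ⨆ N, ∫⁻ ω, Φ ω * κ.hitProbWithin C N (ω n) ∂μ := by
        rw [lintegral_iSup hwindow_meas hwindow_mono]
        simp_rw [hμ.lintegral_mul_indicator_hitWithin hC _ n hΦ hΦn]
    _ = ∫⁻ ω, Φ ω * κ.hitProb C (ω n) ∂μ := by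
        simp_rw [Kernel.hitProb, ENNReal.mul_iSup]
        refine (lintegral_iSup (fun N => hΦ.mul ?_) fun N N' hN ω => ?_).symm
        · exact (Kernel.measurable_hitProbWithin hC N).comp (measurable_pi_apply n)
        · exact mul_le_mul_right (Kernel.monotone_hitProbWithin hN _) _

lemma lintegral_mul_indicator_hitAfter {C : Set S} (hC : MeasurableSet C) (j : ℕ) :
    ∀ (m : ℕ) {Φ : (ℕ → S) → ℝ≥0∞}, Measurable Φ → DependsOn Φ (Set.Iic m) →
      ∫⁻ ω, Φ ω * {ω : ℕ → S | ∃ i, ω (m + j + i) ∈ C}.indicator 1 ω ∂μ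
        = ∫⁻ ω, Φ ω * κ.hitProbAfter C j (ω m) ∂μ := by
  induction j with
  | zero => exact fun m Φ hΦ hΦm => hμ.lintegral_mul_indicator_hitFrom hC m hΦ hΦm
  | succ j ih =>
    intro m Φ hΦ hΦm
    rw [show m + (j + 1) = m + 1 + j by omega,
      ih (m + 1) hΦ (hΦm.mono (Set.Iic_subset_Iic.2 m.le_succ)),
      hμ.lintegral_mul_succ hΦ hΦm (Kernel.measurable_hitProbAfter hC j)]
    rfl

lemma measure_inter_frequently {C : Set S} (hκ : ∀ z, κ z Set.univ ≤ 1)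
    (hC : MeasurableSet C) {m : ℕ} {A : Set (ℕ → S)} (hA : MeasurableSet A)
    (hAm : DependsOn (A.indicator (1 : (ℕ → S) → ℝ≥0∞)) (Set.Iic m)) :
    μ (A ∩ {ω | ∃ᶠ k in atTop, ω k ∈ C}) = ∫⁻ ω in A, κ.hitProbInfOften C (ω m) ∂μ := by
  have := hμ.isProb
  have htail : ∀ j, μ (A ∩ {ω | ∃ i, ω (m + j + i) ∈ C})
      = ∫⁻ ω in A, κ.hitProbAfter C j (ω m) ∂μ := fun j => by
    rw [← lintegral_indicator_one (hA.inter (by measurability)), Set.inter_indicator_one,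
      ← lintegral_indicator_one_mul hA]
    exact hμ.lintegral_mul_indicator_hitAfter hC j m (measurable_one.indicator hA) hAm
  have hanti : Antitone fun j => A ∩ {ω | ∃ i, ω (m + j + i) ∈ C} :=
    fun j j' hj ω ⟨hωA, i, hi⟩ => ⟨hωA, j' - j + i, by convert hi using 2; omega⟩
  rw [setOf_frequently_eq_iInter C m, Set.inter_iInter, hanti.measure_iInter
    (fun j => (hA.inter (by measurability)).nullMeasurableSet) ⟨0, measure_ne_top μ _⟩]
  simp_rw [htail]
  refine (lintegral_iInf (f := fun j (ω : ℕ → S) => κ.hitProbAfter C j (ω m))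
    (fun j => (Kernel.measurable_hitProbAfter hC j).comp (measurable_pi_apply m))
    (fun j j' hj ω => Kernel.antitone_hitProbAfter hκ hC hj _) ?_).symm
  refine ne_top_of_le_ne_top (measure_ne_top μ A) ?_
  calc ∫⁻ ω in A, κ.hitProbAfter C 0 (ω m) ∂μ ≤ ∫⁻ _ in A, 1 ∂μ :=
        lintegral_mono fun ω => Kernel.hitProbAfter_le_one hκ hC 0 _
    _ = μ A := by simp

lemma ae_eventually_notMem {C : Set S} (hκ : ∀ z, κ z Set.univ ≤ 1) (hC : MeasurableSet C)
    {c : ℝ≥0∞} (hc : c < 1) (hconst : ∀ m, ∀ᵐ ω ∂μ, κ.hitProbInfOften C (ω m) = c) :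
    ∀ᵐ ω ∂μ, ∀ᶠ k in atTop, ω k ∉ C := by
  have := hμ.isProb
  have hE : MeasurableSet {ω : ℕ → S | ∃ᶠ k in atTop, ω k ∈ C} := by
    rw [setOf_frequently_eq_iInter C 0]; measurability
  have hnull : μ {ω : ℕ → S | ∃ᶠ k in atTop, ω k ∈ C} = 0 := by
    refine measure_eq_zero_of_forall_inter_eq_mul generateFrom_measurableCylinders.symm
      isPiSystem_measurableCylinders (univ_mem_measurableCylinders _) hE hc fun A hA => ?_
    simp only [measurableCylinders_nat, Set.mem_iUnion, Set.mem_singleton_iff] at hA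
    obtain ⟨m, B, hB, rfl⟩ := hA
    have hAm := dependsOn_cylinder_indicator_const (α := fun _ => S) B (1 : ℝ≥0∞)
    rw [Finset.coe_Iic] at hAm
    rw [hμ.measure_inter_frequently hκ hC hB.cylinder hAm,
      lintegral_congr_ae (ae_restrict_of_ae (hconst m)), setLIntegral_const]
  simpa [Filter.not_frequently] using measure_eq_zero_iff_ae_notMem.1 hnull

end IsMarkovChainLawAt

end MarkovChain

lemma IsMarkovChainLawAt.ae_eventually_lt_of_lt_iSup {S : Type*} [MeasurableSpace S]
    {P : Kernel S S} [IsMarkovKernel P] {h : S → ℝ} (hmeas : Measurable h)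
    (hnonneg : ∀ y, 0 ≤ h y) (hharm : Harmonic P h)
    (hmin : ∀ k : S → ℝ, Measurable k → (∀ y, 0 ≤ k y) → (∀ y, k y ≤ h y) →
      Harmonic P k → ∃ c ∈ Set.Icc (0 : ℝ) 1, ∀ y, k y = c * h y)
    {μ : Measure (ℕ → S)} {x : S} (hμ : IsMarkovChainLawAt (Kernel.doobTransform P h) μ x)
    (hx : 0 < h x) {q : ℝ} (hq : ENNReal.ofReal q < ⨆ y, ENNReal.ofReal (h y)) :
    ∀ᵐ ω ∂μ, ∀ᶠ n in atTop, q < h (ω n) := by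
  have hκ := Kernel.doobTransform_apply_univ_le_one hmeas hnonneg hharm
  have hpos : ∀ m, ∀ᵐ ω ∂μ, 0 < h (ω m) := fun m =>
    (hμ.ae_notMem (measurableSet_le hmeas measurable_const) (not_le.2 hx)
      (Kernel.doobTransform_apply_setOf_nonpos hmeas) m).mono fun _ hω => not_le.1 hω
  have hC : MeasurableSet {y | h y ≤ q} := measurableSet_le hmeas measurable_const
  obtain ⟨c, hc⟩ := Kernel.exists_eq_const_of_lintegral_doobTransform_eq hmeas hnonneg hharm hmin
    (Kernel.measurable_hitProbInfOften hC)
    (fun z => (Kernel.hitProbInfOften_le_hitProb z).trans (Kernel.hitProb_le_one hκ z))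
    (Kernel.lintegral_hitProbInfOften hκ hC)
  obtain ⟨z, hz⟩ := lt_iSup_iff.1 hq
  have hc1 : c < 1 := hc z (ENNReal.ofReal_pos.1 (pos_of_gt hz)) ▸
    (Kernel.hitProbInfOften_le_hitProb z).trans_lt
      (Kernel.hitProb_doobTransform_lt_one hmeas hnonneg hharm hC (fun _ hy => hy) hz)
  filter_upwards [hμ.ae_eventually_notMem hκ hC hc1 fun m => (hpos m).mono fun ω => hc _]
    with ω hω
  exact hω.mono fun _ hn => not_le.1 hn

lemma ENNReal.tendsto_ofReal_iSup {ι : Type*} {f : ι → ℝ} {u : ℕ → ι}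
    (hu : ∀ q : ℚ, ENNReal.ofReal q < ⨆ i, ENNReal.ofReal (f i) →
      ∀ᶠ n in atTop, (q : ℝ) < f (u n)) :
    Tendsto (fun n => ENNReal.ofReal (f (u n))) atTop (nhds (⨆ i, ENNReal.ofReal (f i))) := by
  refine tendsto_order.2 ⟨fun b hb => ?_, fun b hb => .of_forall fun n =>
    (le_iSup (fun i => ENNReal.ofReal (f i)) (u n)).trans_lt hb⟩
  obtain ⟨q, hq, hbq, hqL⟩ := ENNReal.lt_iff_exists_rat_btwn.1 hb
  filter_upwards [hu q hqL] with n hn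
  exact hbq.trans ((ENNReal.ofReal_lt_ofReal_iff_of_nonneg (by exact_mod_cast hq)).2 hn)

/-- Proposition 7: if `h` is a minimal nonnegative harmonic function for `P`
(every harmonic `0 ≤ k ≤ h` is `c·h` for some `c ∈ [0,1]`), then for every `x` with
`h x > 0`, `h(X_n) → sup h` almost surely under the `h`-transformed law `P_x^h`
(the law of the chain with Doob kernel `P^h` started at `x`). -/
theorem minimal_harmonic_tendsto_sup {S : Type*} [MeasurableSpace S]
    (P : ProbabilityTheory.Kernel S S) [IsMarkovKernel P]
    (h : S → ℝ) (hmeas : Measurable h) (hnonneg : ∀ y, 0 ≤ h y)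
    (hharm : Harmonic P h)
    (hmin : ∀ k : S → ℝ, Measurable k → (∀ y, 0 ≤ k y) → (∀ y, k y ≤ h y) →
      Harmonic P k → ∃ c ∈ Set.Icc (0 : ℝ) 1, ∀ y, k y = c * h y)
    (Ph : ProbabilityTheory.Kernel S S)
    (hPh : Ph = P.withDensity fun x y => ENNReal.ofReal (h y) / ENNReal.ofReal (h x))
    (Plawh : S → MeasureTheory.Measure (ℕ → S))
    (hlawh : ∀ x, 0 < h x → IsMarkovChainLawAt Ph (Plawh x) x)
    (x : S) (hx : 0 < h x) :
    ∀ᵐ ω ∂(Plawh x),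
      Filter.Tendsto (fun n => ENNReal.ofReal (h (ω n))) Filter.atTop
        (nhds (⨆ y, ENNReal.ofReal (h y))) := by
  subst hPh
  have hlevel : ∀ q : ℚ, ENNReal.ofReal q < ⨆ y, ENNReal.ofReal (h y) →
      ∀ᵐ ω ∂Plawh x, ∀ᶠ n in atTop, (q : ℝ) < h (ω n) := fun q hq =>
    (hlawh x hx).ae_eventually_lt_of_lt_iSup hmeas hnonneg hharm hmin hx hq
  filter_upwards [ae_all_iff.2 fun q => eventually_imp_distrib_left.2 (hlevel q)] with ω hω
  exact ENNReal.tendsto_ofReal_iSup hω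
end

section
/- In the setting of Proposition 7's proof: if for each continuity point γ of the distribution of L := lim h(X_n) under P_x^h, the value α = P_x^h(L ≤ γ) is the same for all x ∈ S^h, then α ∈ {0,1}; i.e., L has a degenerate distribution under P_x^h. -/
open MeasureTheory ProbabilityTheory ENNReal Filter

open Topology Set
open scoped NNReal

/-! The event `{L ≤ γ}` is, up to null sets, the limit of the events `{h(X_n) ≤ γ}`, since
`γ` is a continuity point. Conditioning on `X_n` and applying the Markov property, the
probability of `{h(X_n) ≤ γ, h(X_{n+k}) ≤ γ}` becomes an integral of `P^h_{X_n}(h(X_k) ≤ γ)`,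
which tends to the constant `α` as `k → ∞`. Hence `P(h(X_n) ≤ γ, L ≤ γ) = α P(h(X_n) ≤ γ)`,
and letting `n → ∞` gives `α = α²`. -/

noncomputable def kernelOp {S : Type*} [MeasurableSpace S] (κ : Kernel S S) (g : S → ℝ≥0∞)
    (y : S) : ℝ≥0∞ :=
  ∫⁻ z, g z ∂κ y

noncomputable def hTransform {S : Type*} [MeasurableSpace S] (P : Kernel S S)
    [IsSFiniteKernel P] (h : S → ℝ) : Kernel S S :=
  P.withDensity fun x y => ENNReal.ofReal (h y) / ENNReal.ofReal (h x)

section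

variable {S : Type*} [MeasurableSpace S] {κ : Kernel S S}

lemma Measurable.kernelOp {g : S → ℝ≥0∞} (hg : Measurable g) : Measurable (kernelOp κ g) :=
  (Measure.measurable_lintegral hg).comp κ.measurable

lemma measurable_iterate_kernelOp {g : S → ℝ≥0∞} (hg : Measurable g) (k : ℕ) :
    Measurable ((kernelOp κ)^[k] g) := by
  induction k generalizing g with
  | zero => exact hg
  | succ k ih => exact ih hg.kernelOp

/-- This holds also where `h y = 0`: the density `ofReal (h z) / 0` is `⊤` where `h z > 0`,
but `0 / 0 = 0` in `ℝ≥0∞`. -/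
lemma hTransform_apply_compl_setOf_pos (P : Kernel S S) [IsSFiniteKernel P] {h : S → ℝ}
    (hh : Measurable h) (y : S) : hTransform P h y {z | 0 < h z}ᶜ = 0 := by
  have hdens : Measurable
      (Function.uncurry fun x y => ENNReal.ofReal (h y) / ENNReal.ofReal (h x)) :=
    (hh.comp measurable_snd).ennreal_ofReal.div (hh.comp measurable_fst).ennreal_ofReal
  have hset : MeasurableSet {z | 0 < h z}ᶜ := (measurableSet_lt measurable_const hh).compl
  rw [hTransform, Kernel.withDensity_apply _ hdens, withDensity_apply _ hset]
  refine (setLIntegral_congr_fun hset fun z hz => ?_).trans lintegral_zero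
  simp [ENNReal.ofReal_eq_zero.2 (not_lt.1 hz)]

namespace IsMarkovChainLawAt

variable {μ : Measure (ℕ → S)} {x : S}

lemma ae_eval_zero_mem (hμ : IsMarkovChainLawAt κ μ x) {s : Set S} (hs : MeasurableSet s)
    (hx : x ∈ s) : ∀ᵐ ω ∂μ, ω 0 ∈ s := by
  have := hμ.isProb
  have ht : MeasurableSet {ω : ℕ → S | ω 0 ∈ s} := measurable_pi_apply 0 hs
  refine (prob_compl_eq_zero_iff ht).2 (le_antisymm prob_le_one ?_)
  rw [← hμ.start]
  exact measure_mono fun ω (hω : ω 0 = x) => show ω 0 ∈ s from hω ▸ hx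

lemma lintegral_eval_zero (hμ : IsMarkovChainLawAt κ μ x) {g : S → ℝ≥0∞} (hg : Measurable g) :
    ∫⁻ ω, g (ω 0) ∂μ = g x := by
  have := hμ.isProb
  have hae : ∀ᵐ ω ∂μ, ω 0 ∈ g ⁻¹' {g x} :=
    hμ.ae_eval_zero_mem (hg (measurableSet_singleton _)) rfl
  rw [lintegral_congr_ae hae, lintegral_const, measure_univ, mul_one]

lemma lintegral_mul_eval_add (hμ : IsMarkovChainLawAt κ μ x) {φ g : S → ℝ≥0∞}
    (hφ : Measurable φ) (hg : Measurable g) (n k : ℕ) :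
    ∫⁻ ω, φ (ω n) * g (ω (n + k)) ∂μ = ∫⁻ ω, φ (ω n) * (kernelOp κ)^[k] g (ω n) ∂μ := by
  induction k generalizing g with
  | zero => rfl
  | succ k ih =>
    rw [Function.iterate_succ_apply, ← ih hg.kernelOp]
    exact hμ.markov (n + k) (fun v => φ (v ⟨n, by omega⟩)) g
      (hφ.comp (measurable_pi_apply _)) hg

lemma lintegral_eval (hμ : IsMarkovChainLawAt κ μ x) {g : S → ℝ≥0∞} (hg : Measurable g)
    (k : ℕ) : ∫⁻ ω, g (ω k) ∂μ = (kernelOp κ)^[k] g x := by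
  simpa [hμ.lintegral_eval_zero (measurable_iterate_kernelOp hg k)] using
    hμ.lintegral_mul_eval_add measurable_const hg 0 k (φ := 1)

lemma iterate_kernelOp_le_one (hμ : IsMarkovChainLawAt κ μ x) {g : S → ℝ≥0∞}
    (hg : Measurable g) (hg1 : ∀ y, g y ≤ 1) (k : ℕ) : (kernelOp κ)^[k] g x ≤ 1 := by
  have := hμ.isProb
  rw [← hμ.lintegral_eval hg]
  calc ∫⁻ ω, g (ω k) ∂μ ≤ ∫⁻ _, 1 ∂μ := lintegral_mono fun ω => hg1 _
    _ = 1 := by simp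

lemma ae_eval_mem (hμ : IsMarkovChainLawAt κ μ x) {s : Set S} (hs : MeasurableSet s)
    (hκ : ∀ y, κ y sᶜ = 0) (hx : x ∈ s) (n : ℕ) : ∀ᵐ ω ∂μ, ω n ∈ s := by
  cases n with
  | zero => exact hμ.ae_eval_zero_mem hs hx
  | succ n =>
    have hmarkov := hμ.markov n 1 (sᶜ.indicator 1) measurable_const
      (measurable_const.indicator hs.compl)
    simp only [Pi.one_apply, one_mul, lintegral_indicator_one hs.compl, hκ, lintegral_zero]
      at hmarkov
    rw [ae_iff]
    change μ ((fun ω : ℕ → S => ω (n + 1)) ⁻¹' sᶜ) = 0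
    rw [← lintegral_indicator_one (measurable_pi_apply (n + 1) hs.compl)]
    exact hmarkov

lemma tendsto_iterate_kernelOp (hμ : IsMarkovChainLawAt κ μ x) {A : Set (ℕ → S)}
    (hA : MeasurableSet A) {g : S → ℝ≥0∞} (hg : Measurable g) (hg1 : ∀ y, g y ≤ 1)
    (hgA : ∀ᵐ ω ∂μ, Tendsto (fun n => g (ω n)) atTop (𝓝 (A.indicator 1 ω))) :
    Tendsto (fun k => (kernelOp κ)^[k] g x) atTop (𝓝 (μ A)) := by
  have := hμ.isProb
  simp_rw [← hμ.lintegral_eval hg, ← lintegral_indicator_one hA]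
  exact tendsto_lintegral_of_dominated_convergence 1
    (fun k => hg.comp (measurable_pi_apply k)) (fun k => ae_of_all _ fun ω => hg1 _) (by simp) hgA

end IsMarkovChainLawAt

variable {ν : S → Measure (ℕ → S)} {s : Set S} {A : Set (ℕ → S)} {g : S → ℝ≥0∞} {α : ℝ≥0∞}
  {o : S}

lemma lintegral_eval_mul_indicator_eq (hs : MeasurableSet s) (hκ : ∀ y, κ y sᶜ = 0)
    (hν : ∀ x ∈ s, IsMarkovChainLawAt κ (ν x) x) (hA : MeasurableSet A) (hg : Measurable g)
    (hg1 : ∀ y, g y ≤ 1)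
    (hgA : ∀ x ∈ s, ∀ᵐ ω ∂ν x, Tendsto (fun n => g (ω n)) atTop (𝓝 (A.indicator 1 ω)))
    (hα : ∀ x ∈ s, ν x A = α) (ho : o ∈ s) (n : ℕ) :
    ∫⁻ ω, g (ω n) * A.indicator 1 ω ∂ν o = α * ∫⁻ ω, g (ω n) ∂ν o := by
  have hνo := hν o ho
  have := hνo.isProb
  have hgn : Measurable fun ω : ℕ → S => g (ω n) := hg.comp (measurable_pi_apply n)
  have hg_ne_top : ∀ y, g y ≠ ⊤ := fun y => ((hg1 y).trans_lt one_lt_top).ne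
  have hpath : ∀ᵐ ω ∂ν o, ω n ∈ s := hνo.ae_eval_mem hs hκ ho n
  have hleft : Tendsto (fun k => ∫⁻ ω, g (ω n) * g (ω (n + k)) ∂ν o) atTop
      (𝓝 (∫⁻ ω, g (ω n) * A.indicator 1 ω ∂ν o)) := by
    refine tendsto_lintegral_of_dominated_convergence 1
      (fun k => hgn.mul (hg.comp (measurable_pi_apply _)))
      (fun k => ae_of_all _ fun ω => mul_le_one' (hg1 _) (hg1 _)) (by simp) ?_
    filter_upwards [hgA o ho] with ω hω
    have hshift : Tendsto (fun k => n + k) atTop atTop :=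
      (tendsto_add_atTop_nat n).congr fun k => Nat.add_comm k n
    exact ENNReal.Tendsto.const_mul (hω.comp hshift) (Or.inr (hg_ne_top _))
  have hright : Tendsto (fun k => ∫⁻ ω, g (ω n) * (kernelOp κ)^[k] g (ω n) ∂ν o) atTop
      (𝓝 (∫⁻ ω, g (ω n) * α ∂ν o)) := by
    refine tendsto_lintegral_of_dominated_convergence 1
      (fun k => hgn.mul ((measurable_iterate_kernelOp hg k).comp (measurable_pi_apply n)))
      (fun k => ?_) (by simp) ?_
    · filter_upwards [hpath] with ω hω
      exact mul_le_one' (hg1 _) ((hν _ hω).iterate_kernelOp_le_one hg hg1 k)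
    · filter_upwards [hpath] with ω hω
      have hlim := (hν _ hω).tendsto_iterate_kernelOp hA hg hg1 (hgA _ hω)
      rw [hα _ hω] at hlim
      exact ENNReal.Tendsto.const_mul hlim (Or.inr (hg_ne_top _))
  simp_rw [hνo.lintegral_mul_eval_add hg hg] at hleft
  rw [tendsto_nhds_unique hleft hright, lintegral_mul_const _ hgn, mul_comm]

theorem eq_zero_or_one_of_tendsto_indicator (hs : MeasurableSet s) (hκ : ∀ y, κ y sᶜ = 0)
    (hν : ∀ x ∈ s, IsMarkovChainLawAt κ (ν x) x) (hA : MeasurableSet A) (hg : Measurable g)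
    (hg1 : ∀ y, g y ≤ 1)
    (hgA : ∀ x ∈ s, ∀ᵐ ω ∂ν x, Tendsto (fun n => g (ω n)) atTop (𝓝 (A.indicator 1 ω)))
    (hα : ∀ x ∈ s, ν x A = α) (ho : o ∈ s) : α = 0 ∨ α = 1 := by
  have := (hν o ho).isProb
  have hα_ne_top : α ≠ ⊤ := hα o ho ▸ measure_ne_top _ _
  have hleft : Tendsto (fun n => ∫⁻ ω, g (ω n) * A.indicator 1 ω ∂ν o) atTop
      (𝓝 (∫⁻ ω, A.indicator 1 ω * A.indicator 1 ω ∂ν o)) := by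
    refine tendsto_lintegral_of_dominated_convergence 1
      (fun n => (hg.comp (measurable_pi_apply n)).mul (measurable_const.indicator hA))
      (fun n => ae_of_all _ fun ω => mul_le_one' (hg1 _) (indicator_le_self A 1 ω))
      (by simp) ?_
    filter_upwards [hgA o ho] with ω hω
    exact ENNReal.Tendsto.mul_const hω
      (Or.inr ((indicator_le_self A 1 ω).trans_lt one_lt_top).ne)
  have hright : Tendsto (fun n => α * ∫⁻ ω, g (ω n) ∂ν o) atTop (𝓝 (α * α)) := by
    refine ENNReal.Tendsto.const_mul ?_ (Or.inr hα_ne_top)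
    rw [← hα o ho, ← lintegral_indicator_one hA]
    exact tendsto_lintegral_of_dominated_convergence 1
      (fun n => hg.comp (measurable_pi_apply n)) (fun n => ae_of_all _ fun ω => hg1 _) (by simp)
      (hgA o ho)
  simp_rw [lintegral_eval_mul_indicator_eq hs hκ hν hA hg hg1 hgA hα ho] at hleft
  have hsq : α * α = α := by
    rw [← tendsto_nhds_unique hleft hright, ← hα o ho, ← lintegral_indicator_one hA]
    congr 1 with ω
    by_cases hω : ω ∈ A <;> simp [hω]
  lift α to ℝ≥0 using hα_ne_top
  norm_cast at hsq ⊢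
  exact (mul_right_eq_self₀.1 hsq).symm

end

theorem limit_distribution_degenerate_general {S : Type*} [MeasurableSpace S]
    (P : ProbabilityTheory.Kernel S S) [IsMarkovKernel P]
    (h : S → ℝ) (hmeas : Measurable h)
    (Ph : ProbabilityTheory.Kernel S S)
    (hPh : Ph = P.withDensity fun x y => ENNReal.ofReal (h y) / ENNReal.ofReal (h x))
    (Plawh : S → MeasureTheory.Measure (ℕ → S))
    (hlawh : ∀ x, 0 < h x → IsMarkovChainLawAt Ph (Plawh x) x)
    (L : (ℕ → S) → ℝ) (hLmeas : Measurable L)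
    (hL : ∀ x, 0 < h x → ∀ᵐ ω ∂(Plawh x),
      Filter.Tendsto (fun n => h (ω n)) Filter.atTop (nhds (L ω)))
    (o : S) (ho : 0 < h o)
    (γ : ℝ) (α : ℝ≥0∞)
    (hcont : ∀ x, 0 < h x → Plawh x {ω | L ω = γ} = 0)
    (hα : ∀ x, 0 < h x → Plawh x {ω | L ω ≤ γ} = α) :
    α = 0 ∨ α = 1 := by
  change Ph = hTransform P h at hPh
  subst hPh
  refine eq_zero_or_one_of_tendsto_indicator (g := fun y => (Iic γ).indicator 1 (h y))
    (A := L ⁻¹' Iic γ) (measurableSet_lt measurable_const hmeas)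
    (hTransform_apply_compl_setOf_pos P hmeas) hlawh (hLmeas measurableSet_Iic)
    (measurable_const.indicator measurableSet_Iic |>.comp hmeas)
    (fun y => indicator_le_self _ 1 _) (fun x hx => ?_) hα ho
  filter_upwards [hL x hx, measure_eq_zero_iff_ae_notMem.1 (hcont x hx)] with ω hω hne
  have hγ : L ω ∉ frontier (Iic γ) := by rwa [frontier_Iic]
  exact (continuousOn_const.continuousAt_indicator hγ).tendsto.comp hω

/-- Degeneracy step in the proof of Proposition 7: let `L = lim_n h(X_n)` under the
`h`-transformed laws `P_x^h`. If for a continuity point `γ` of the distribution of `L`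
the value `α = P_x^h(L ≤ γ)` is the same for all `x ∈ S^h = {h > 0}`, then `α ∈ {0,1}`;
i.e. `L` has a degenerate distribution. -/
theorem limit_distribution_degenerate {S : Type*} [MeasurableSpace S]
    (P : ProbabilityTheory.Kernel S S) [IsMarkovKernel P]
    (h : S → ℝ) (hmeas : Measurable h) (hnonneg : ∀ y, 0 ≤ h y)
    (hharm : Harmonic P h)
    (Ph : ProbabilityTheory.Kernel S S)
    (hPh : Ph = P.withDensity fun x y => ENNReal.ofReal (h y) / ENNReal.ofReal (h x))
    (Plawh : S → MeasureTheory.Measure (ℕ → S))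
    (hlawh : ∀ x, 0 < h x → IsMarkovChainLawAt Ph (Plawh x) x)
    (L : (ℕ → S) → ℝ) (hLmeas : Measurable L)
    (hL : ∀ x, 0 < h x → ∀ᵐ ω ∂(Plawh x),
      Filter.Tendsto (fun n => h (ω n)) Filter.atTop (nhds (L ω)))
    (o : S) (ho : 0 < h o)
    (γ : ℝ) (α : ℝ≥0∞)
    (hcont : ∀ x, 0 < h x → Plawh x {ω | L ω = γ} = 0)
    (hα : ∀ x, 0 < h x → Plawh x {ω | L ω ≤ γ} = α) :
    α = 0 ∨ α = 1 :=
  limit_distribution_degenerate_general P h hmeas Ph hPh Plawh hlawh L hLmeas hL o ho γ α hcont hα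
end

section
/- Let ν be a nondegenerate probability measure on ℝ^d with everywhere-finite moment generating function φ and mean μ = ∫ x ν(dx) ≠ 0. If u ≠ 0 satisfies φ(u) = 1, then ⟨u, μ⟩ < 0 and ⟨u, grad φ(u)⟩ > 0. -/
/-!
With `Y = ⟨u, X⟩` for `X ∼ ν`, the tangent-line inequalities of `exp` at `0` and at `Y` give
`Y ≤ e^Y - 1` and `e^Y - 1 ≤ Y e^Y`, both strict unless `Y = 0`. Taking expectations and using
`E e^Y = φ(u) = 1` yields `E Y < 0 < E[Y e^Y]`, and these are `⟨u, μ⟩` and `⟨u, grad φ(u)⟩`.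
Nondegeneracy is exactly what rules out `Y = 0` almost surely.
-/

open MeasureTheory ProbabilityTheory ENNReal Filter

open scoped RealInnerProductSpace

open Real

lemma abs_mul_exp_le_exp_add_add_exp_sub (s t : ℝ) :
    |s| * exp t ≤ exp (t + s) + exp (t - s) := by
  rw [exp_add, exp_sub, div_eq_mul_inv, ← exp_neg]
  have hs : |s| ≤ exp s + exp (-s) := by
    rcases abs_cases s with ⟨h, -⟩ | ⟨h, -⟩ <;> rw [h]
    · linarith [add_one_le_exp s, exp_pos (-s)]
    · linarith [add_one_le_exp (-s), exp_pos s]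
  nlinarith [exp_pos t]

section MomentGeneratingFunction

variable {E : Type*} [NormedAddCommGroup E] [InnerProductSpace ℝ E] [MeasurableSpace E]
  [OpensMeasurableSpace E] {ν : Measure E}

lemma integrable_exp_inner_mul_inner (hmgf : ∀ w : E, Integrable (fun x => exp ⟪w, x⟫) ν)
    (w v : E) : Integrable (fun x => exp ⟪w, x⟫ * ⟪v, x⟫) ν := by
  refine ((hmgf (w + v)).add (hmgf (w - v))).mono' (by fun_prop) (ae_of_all _ fun x => ?_)
  rw [norm_mul, norm_of_nonneg (exp_pos _).le, norm_eq_abs, mul_comm, Pi.add_apply,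
    inner_add_left, inner_sub_left]
  exact abs_mul_exp_le_exp_add_add_exp_sub _ _

lemma EuclideanSpace.integrable_exp_inner_smul {ι : Type*} [Fintype ι]
    {ν : Measure (EuclideanSpace ℝ ι)}
    (hmgf : ∀ w : EuclideanSpace ℝ ι, Integrable (fun x => exp ⟪w, x⟫) ν)
    (w : EuclideanSpace ℝ ι) : Integrable (fun x => exp ⟪w, x⟫ • x) ν := by
  classical
  refine integrable_piLp_iff.2 fun i => ?_
  simpa [EuclideanSpace.inner_single_left] using
    integrable_exp_inner_mul_inner hmgf w (EuclideanSpace.single i 1)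

end MomentGeneratingFunction

section StrictTangentBounds

variable {Ω : Type*} [MeasurableSpace Ω] {μ : Measure Ω} {Y : Ω → ℝ}

lemma integral_comp_pos_of_not_ae_eq_zero {g : ℝ → ℝ} (hg_nonneg : ∀ t, 0 ≤ g t)
    (hg_pos : ∀ t, t ≠ 0 → 0 < g t) (hg : Integrable (fun ω => g (Y ω)) μ)
    (hY : ¬ Y =ᵐ[μ] 0) : 0 < ∫ ω, g (Y ω) ∂μ := by
  rw [integral_pos_iff_support_of_nonneg (fun ω => hg_nonneg (Y ω)) hg]
  have hY_pos : 0 < μ {ω | Y ω ≠ 0} := pos_iff_ne_zero.2 fun h => hY (ae_iff.2 (by simpa using h))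
  exact hY_pos.trans_le (measure_mono fun ω hω => (hg_pos _ hω).ne')

variable [IsProbabilityMeasure μ]

lemma integral_neg_of_integral_exp_eq_one (hY : Integrable Y μ)
    (hexp : Integrable (fun ω => exp (Y ω)) μ) (h1 : ∫ ω, exp (Y ω) ∂μ = 1)
    (hY0 : ¬ Y =ᵐ[μ] 0) : ∫ ω, Y ω ∂μ < 0 := by
  have hg := integral_comp_pos_of_not_ae_eq_zero (g := fun t => exp t - 1 - t)
    (fun t => by linarith [add_one_le_exp t]) (fun t ht => by linarith [add_one_lt_exp ht])
    ((hexp.sub (integrable_const 1)).sub hY) hY0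
  rw [integral_sub (f := fun ω => exp (Y ω) - 1) (hexp.sub (integrable_const 1)) hY,
    integral_sub hexp (integrable_const 1), h1] at hg
  simpa using hg

lemma integral_exp_mul_pos_of_integral_exp_eq_one (hexp : Integrable (fun ω => exp (Y ω)) μ)
    (hYexp : Integrable (fun ω => exp (Y ω) * Y ω) μ) (h1 : ∫ ω, exp (Y ω) ∂μ = 1)
    (hY0 : ¬ Y =ᵐ[μ] 0) : 0 < ∫ ω, exp (Y ω) * Y ω ∂μ := by
  -- `e^t (t - 1) + 1 = e^t (t - 1 + e^{-t})`, and `e^{-t} > 1 - t` for `t ≠ 0`.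
  have hg_pos (t : ℝ) (ht : t ≠ 0) : 0 < exp t * t - exp t + 1 := by
    have h := add_one_lt_exp (neg_ne_zero.2 ht)
    have : exp t * exp (-t) = 1 := by rw [← exp_add]; simp
    nlinarith [exp_pos t]
  have hg := integral_comp_pos_of_not_ae_eq_zero (g := fun t => exp t * t - exp t + 1)
    (fun t => by rcases eq_or_ne t 0 with rfl | ht <;> [simp; exact (hg_pos t ht).le]) hg_pos
    ((hYexp.sub hexp).add (integrable_const 1)) hY0
  rw [integral_add (f := fun ω => exp (Y ω) * Y ω - exp (Y ω)) (hYexp.sub hexp)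
    (integrable_const 1), integral_sub hYexp hexp, h1] at hg
  simpa using hg

end StrictTangentBounds

theorem tilt_drift_signs_general (d : ℕ) (ν : MeasureTheory.Measure (EuclideanSpace ℝ (Fin d)))
    [IsProbabilityMeasure ν]
    (hmgf : ∀ w : EuclideanSpace ℝ (Fin d),
      MeasureTheory.Integrable (fun x => Real.exp ⟪w, x⟫) ν)
    (hnondeg : ∀ w : EuclideanSpace ℝ (Fin d), w ≠ 0 → ∀ c : ℝ, ν {x | ⟪w, x⟫ = c} < 1)
    (u : EuclideanSpace ℝ (Fin d)) (hu0 : u ≠ 0)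
    (hu : ∫ x, Real.exp ⟪u, x⟫ ∂ν = 1) :
    ⟪u, ∫ x, x ∂ν⟫ < 0 ∧ 0 < ⟪u, ∫ x, Real.exp ⟪u, x⟫ • x ∂ν⟫ := by
  have hX : Integrable (fun x => x) ν := by
    simpa using EuclideanSpace.integrable_exp_inner_smul hmgf 0
  have hY0 : ¬ (fun x => ⟪u, x⟫) =ᵐ[ν] 0 := fun h => by
    have h1 : ν {x | ⟪u, x⟫ = 0} = 1 := by
      rw [← measure_univ (μ := ν)]
      exact measure_congr (h.mono fun x hx => eq_iff_iff.2 ⟨fun _ => trivial, fun _ => hx⟩)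
    exact (hnondeg u hu0 0).ne h1
  constructor
  · rw [← integral_inner hX]
    exact integral_neg_of_integral_exp_eq_one (hX.const_inner u) (hmgf u) hu hY0
  · rw [← integral_inner (EuclideanSpace.integrable_exp_inner_smul hmgf u)]
    simp_rw [real_inner_smul_right]
    exact integral_exp_mul_pos_of_integral_exp_eq_one (hmgf u)
      (integrable_exp_inner_mul_inner hmgf u u) hu hY0

/-- Let `ν` be a nondegenerate probability measure on `ℝ^d` with everywhere finite moment
generating function `φ(w) = ∫ e^{⟨w,x⟩} ν(dx)` and mean `μ = ∫ x ν(dx) ≠ 0`. If `u ≠ 0`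
satisfies `φ(u) = 1`, then `⟨u, μ⟩ < 0` and `⟨u, grad φ(u)⟩ > 0`, where
`grad φ(u) = ∫ x e^{⟨u,x⟩} ν(dx)`. -/
theorem tilt_drift_signs (d : ℕ) (ν : MeasureTheory.Measure (EuclideanSpace ℝ (Fin d)))
    [IsProbabilityMeasure ν]
    (hmgf : ∀ w : EuclideanSpace ℝ (Fin d),
      MeasureTheory.Integrable (fun x => Real.exp ⟪w, x⟫) ν)
    (hnondeg : ∀ w : EuclideanSpace ℝ (Fin d), w ≠ 0 → ∀ c : ℝ, ν {x | ⟪w, x⟫ = c} < 1)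
    (hmean : (∫ x, x ∂ν) ≠ 0)
    (u : EuclideanSpace ℝ (Fin d)) (hu0 : u ≠ 0)
    (hu : ∫ x, Real.exp ⟪u, x⟫ ∂ν = 1) :
    ⟪u, ∫ x, x ∂ν⟫ < 0 ∧ 0 < ⟪u, ∫ x, Real.exp ⟪u, x⟫ • x ∂ν⟫ :=
  tilt_drift_signs_general d ν hmgf hnondeg u hu0 hu
end

section
/- Let (X_n) be a random walk on ℝ^d with drift μ ≠ 0, finite mgf φ, and u ∈ C = {φ = 1}, u ≠ 0. Then under the h_u-transformed law (tilted increments with law e^{⟨u,x⟩}ν(dx)), h_u(X_n) = e^{⟨u,X_n⟩} → ∞ almost surely, while under the original law h_u(X_n) → 0 almost surely. -/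
/-!
Write `Y = ⟪u, ·⟫`. Since `∫ e^Y dν = φ(u) = 1` and `Y` is not `ν`-a.s. constant, strict Jensen
gives `∫ Y dν < 0`. Under the tilted law `e^Y ν` the roles flip: `∫ e^{-Y} d(e^Y ν) = 1`, so
Jensen applied to `-Y` gives `∫ Y d(e^Y ν) > 0`. By the strong law of large numbers,
`⟪u, x + X_n⟫ = ⟪u, x⟫ + ∑_{i<n} Y(ξ_i)` therefore tends to `-∞` under the original law and
to `+∞` under the tilted one.
-/

open MeasureTheory ProbabilityTheory Filter Real Finset Topology

open scoped RealInnerProductSpace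

section ExponentialMoments

variable {α : Type*} [MeasurableSpace α] {ν : Measure α} {Y : α → ℝ}

theorem integral_lt_zero_of_integral_exp_eq_one [IsProbabilityMeasure ν] (hY : Integrable Y ν)
    (hexp : Integrable (fun x => exp (Y x)) ν) (h1 : ∫ x, exp (Y x) ∂ν = 1)
    (hY_ne : ∀ c, ¬ Y =ᵐ[ν] fun _ => c) : ∫ x, Y x ∂ν < 0 := by
  rcases strictConvexOn_exp.ae_eq_const_or_map_average_lt continuous_exp.continuousOn
    isClosed_univ (ae_of_all _ fun _ => Set.mem_univ _) hY hexp with hconst | hlt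
  · exact absurd hconst (hY_ne _)
  · rw [average_eq_integral, average_eq_integral, h1] at hlt
    exact exp_lt_one_iff.mp hlt

theorem tilted_eq_withDensity_of_integral_exp_eq_one (h1 : ∫ x, exp (Y x) ∂ν = 1) :
    ν.tilted Y = ν.withDensity fun x => ENNReal.ofReal (exp (Y x)) := by
  simp only [Measure.tilted, h1, div_one]

theorem integrable_tilted_self (hexp : ∀ t : ℝ, Integrable (fun x => exp (t * Y x)) ν) :
    Integrable Y (ν.tilted Y) := by
  rw [integrable_tilted_iff (by simpa using hexp 1)]
  simpa [mul_comm] using integrable_pow_mul_exp_of_integrable_exp_mul (v := 1) one_ne_zero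
    (by rw [one_add_one_eq_two]; exact hexp 2) (by rw [sub_self]; exact hexp 0) 1

theorem integral_tilted_pos_of_integral_exp_eq_one [IsProbabilityMeasure ν]
    (hexp : ∀ t : ℝ, Integrable (fun x => exp (t * Y x)) ν) (h1 : ∫ x, exp (Y x) ∂ν = 1)
    (hY_ne : ∀ c, ¬ Y =ᵐ[ν] fun _ => c) : 0 < ∫ x, Y x ∂(ν.tilted Y) := by
  have hexp1 : Integrable (fun x => exp (Y x)) ν := by simpa using hexp 1
  have := isProbabilityMeasure_tilted hexp1
  have hexp_neg : Integrable (fun x => exp (-Y x)) (ν.tilted Y) := by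
    rw [integrable_tilted_iff hexp1]
    simp [← exp_add]
  have h1_neg : ∫ x, exp (-Y x) ∂(ν.tilted Y) = 1 := by
    simpa [h1] using integral_exp_tilted Y (fun x => -Y x) (μ := ν)
  have hneg_ne : ∀ c, ¬ (fun x => -Y x) =ᵐ[ν.tilted Y] fun _ => c := fun c hc =>
    hY_ne (-c) <| (absolutelyContinuous_tilted hexp1).ae_eq hc |>.mono fun x hx => by
      simp only at hx; linarith
  simpa [integral_neg] using integral_lt_zero_of_integral_exp_eq_one (Y := fun x => -Y x)
    (integrable_tilted_self hexp).neg hexp_neg h1_neg hneg_ne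

end ExponentialMoments

theorem Filter.Tendsto.sum_range_atTop_of_average {y : ℕ → ℝ} {m : ℝ}
    (h : Tendsto (fun n : ℕ => (∑ i ∈ range n, y i) / n) atTop (𝓝 m)) (hm : 0 < m) :
    Tendsto (fun n => ∑ i ∈ range n, y i) atTop atTop := by
  refine (tendsto_natCast_atTop_atTop.atTop_mul_pos hm h).congr' ?_
  filter_upwards [eventually_ne_atTop 0] with n hn
  field_simp

theorem Filter.Tendsto.sum_range_atBot_of_average {y : ℕ → ℝ} {m : ℝ}
    (h : Tendsto (fun n : ℕ => (∑ i ∈ range n, y i) / n) atTop (𝓝 m)) (hm : m < 0) :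
    Tendsto (fun n => ∑ i ∈ range n, y i) atTop atBot := by
  refine (tendsto_natCast_atTop_atTop.atTop_mul_neg hm h).congr' ?_
  filter_upwards [eventually_ne_atTop 0] with n hn
  field_simp

theorem strong_law_ae_comp {Ω E : Type*} [MeasurableSpace Ω] [MeasurableSpace E]
    {μ : Measure Ω} {ν : Measure E} {ξ : ℕ → Ω → E} (hξ : ∀ i, Measurable (ξ i))
    (hindep : Pairwise fun i j => IndepFun (ξ i) (ξ j) μ) (hlaw : ∀ i, μ.map (ξ i) = ν)
    {g : E → ℝ} (hg : Measurable g) (hgi : Integrable g ν) :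
    ∀ᵐ ω ∂μ, Tendsto (fun n : ℕ => (∑ i ∈ range n, g (ξ i ω)) / n) atTop (𝓝 (∫ y, g y ∂ν)) := by
  have hident : ∀ i, IdentDistrib (ξ i) (ξ 0) μ μ := fun i =>
    ⟨(hξ i).aemeasurable, (hξ 0).aemeasurable, by rw [hlaw i, hlaw 0]⟩
  have hint : Integrable (fun ω => g (ξ 0 ω)) μ := by
    rw [← hlaw 0] at hgi
    exact hgi.comp_measurable (hξ 0)
  have hmean : ∫ ω, g (ξ 0 ω) ∂μ = ∫ y, g y ∂ν := by
    rw [← hlaw 0, integral_map (hξ 0).aemeasurable hg.aestronglyMeasurable]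
  rw [← hmean]
  exact strong_law_ae_real (fun i ω => g (ξ i ω)) hint
    (fun i j hij => (hindep hij).comp hg hg) (fun i => (hident i).comp hg)

theorem tilted_walk_exp_limits_general (d : ℕ) (ν : MeasureTheory.Measure (EuclideanSpace ℝ (Fin d)))
    [IsProbabilityMeasure ν]
    (hmgf : ∀ w : EuclideanSpace ℝ (Fin d),
      MeasureTheory.Integrable (fun y => Real.exp ⟪w, y⟫) ν)
    (hnondeg : ∀ w : EuclideanSpace ℝ (Fin d), w ≠ 0 → ∀ c : ℝ, ν {y | ⟪w, y⟫ = c} < 1)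
    (u : EuclideanSpace ℝ (Fin d)) (hu0 : u ≠ 0)
    (hu : ∫ y, Real.exp ⟪u, y⟫ ∂ν = 1)
    -- the original walk: i.i.d. increments `ξ` with law `ν`
    {Ω : Type*} [MeasurableSpace Ω] (μ : MeasureTheory.Measure Ω)
    (ξ : ℕ → Ω → EuclideanSpace ℝ (Fin d)) (hξmeas : ∀ i, Measurable (ξ i))
    (hξindep : ProbabilityTheory.iIndepFun ξ μ)
    (hξlaw : ∀ i, MeasureTheory.Measure.map (ξ i) μ = ν)
    -- the tilted walk: i.i.d. increments `ξ'` with the tilted law `e^{⟨u,y⟩} ν(dy)`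
    {Ω' : Type*} [MeasurableSpace Ω'] (μ' : MeasureTheory.Measure Ω')
    (ξ' : ℕ → Ω' → EuclideanSpace ℝ (Fin d)) (hξ'meas : ∀ i, Measurable (ξ' i))
    (hξ'indep : ProbabilityTheory.iIndepFun ξ' μ')
    (hξ'law : ∀ i, MeasureTheory.Measure.map (ξ' i) μ'
      = ν.withDensity fun y => ENNReal.ofReal (Real.exp ⟪u, y⟫))
    (x : EuclideanSpace ℝ (Fin d)) :
    (∀ᵐ ω ∂μ, Filter.Tendsto
        (fun n => Real.exp ⟪u, x + ∑ i ∈ Finset.range n, ξ i ω⟫) Filter.atTop (nhds 0))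
      ∧ (∀ᵐ ω ∂μ', Filter.Tendsto
        (fun n => Real.exp ⟪u, x + ∑ i ∈ Finset.range n, ξ' i ω⟫) Filter.atTop Filter.atTop) := by
  set Y : EuclideanSpace ℝ (Fin d) → ℝ := fun y => ⟪u, y⟫
  have hY : Measurable Y := (continuous_const.inner continuous_id).measurable
  have hexp : ∀ t : ℝ, Integrable (fun y => exp (t * Y y)) ν := fun t => by
    simpa [Y, real_inner_smul_left] using hmgf (t • u)
  have hY_ne : ∀ c, ¬ Y =ᵐ[ν] fun _ => c := fun c hc =>
    (hnondeg u hu0 c).ne <| by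
      rw [← measure_univ (μ := ν)]
      exact (ae_iff_measure_eq (hY (measurableSet_singleton c)).nullMeasurableSet).mp hc
  have hexp1 : Integrable (fun y => exp (Y y)) ν := by simpa using hexp 1
  have hν_int : Integrable Y ν := by
    simpa using integrable_pow_of_integrable_exp_mul one_ne_zero (hexp 1) (hexp (-1)) 1
  rw [← tilted_eq_withDensity_of_integral_exp_eq_one hu] at hξ'law
  constructor
  · have hslln := strong_law_ae_comp hξmeas (fun _ _ => hξindep.indepFun) hξlaw hY hν_int
    filter_upwards [hslln] with ω hω
    simp only [inner_add_right, inner_sum]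
    exact tendsto_exp_atBot.comp <| tendsto_atBot_add_const_left _ _ <|
      hω.sum_range_atBot_of_average (integral_lt_zero_of_integral_exp_eq_one hν_int hexp1 hu hY_ne)
  · have hslln := strong_law_ae_comp hξ'meas (fun _ _ => hξ'indep.indepFun) hξ'law hY
      (integrable_tilted_self hexp)
    filter_upwards [hslln] with ω hω
    simp only [inner_add_right, inner_sum]
    exact tendsto_exp_atTop.comp <| tendsto_atTop_add_const_left _ _ <|
      hω.sum_range_atTop_of_average (integral_tilted_pos_of_integral_exp_eq_one hexp hu hY_ne)

/-- For a nondegenerate random walk on `ℝ^d` with increment law `ν`, drift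
`μ = ∫ x ν(dx) ≠ 0`, everywhere finite mgf `φ` and `u ≠ 0` with `φ(u) = 1`:
under the original law `h_u(X_n) = e^{⟨u, X_n⟩} → 0` a.s., while under the
`h_u`-transformed law (i.i.d. increments with the tilted law `e^{⟨u,x⟩} ν(dx)`)
`h_u(X_n) → ∞` a.s. -/
theorem tilted_walk_exp_limits (d : ℕ) (ν : MeasureTheory.Measure (EuclideanSpace ℝ (Fin d)))
    [IsProbabilityMeasure ν]
    (hmgf : ∀ w : EuclideanSpace ℝ (Fin d),
      MeasureTheory.Integrable (fun y => Real.exp ⟪w, y⟫) ν)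
    (hnondeg : ∀ w : EuclideanSpace ℝ (Fin d), w ≠ 0 → ∀ c : ℝ, ν {y | ⟪w, y⟫ = c} < 1)
    (hmean : (∫ y, y ∂ν) ≠ 0)
    (u : EuclideanSpace ℝ (Fin d)) (hu0 : u ≠ 0)
    (hu : ∫ y, Real.exp ⟪u, y⟫ ∂ν = 1)
    -- the original walk: i.i.d. increments `ξ` with law `ν`
    {Ω : Type*} [MeasurableSpace Ω] (μ : MeasureTheory.Measure Ω) [IsProbabilityMeasure μ]
    (ξ : ℕ → Ω → EuclideanSpace ℝ (Fin d)) (hξmeas : ∀ i, Measurable (ξ i))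
    (hξindep : ProbabilityTheory.iIndepFun ξ μ)
    (hξlaw : ∀ i, MeasureTheory.Measure.map (ξ i) μ = ν)
    -- the tilted walk: i.i.d. increments `ξ'` with the tilted law `e^{⟨u,y⟩} ν(dy)`
    {Ω' : Type*} [MeasurableSpace Ω'] (μ' : MeasureTheory.Measure Ω') [IsProbabilityMeasure μ']
    (ξ' : ℕ → Ω' → EuclideanSpace ℝ (Fin d)) (hξ'meas : ∀ i, Measurable (ξ' i))
    (hξ'indep : ProbabilityTheory.iIndepFun ξ' μ')
    (hξ'law : ∀ i, MeasureTheory.Measure.map (ξ' i) μ'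
      = ν.withDensity fun y => ENNReal.ofReal (Real.exp ⟪u, y⟫))
    (x : EuclideanSpace ℝ (Fin d)) :
    (∀ᵐ ω ∂μ, Filter.Tendsto
        (fun n => Real.exp ⟪u, x + ∑ i ∈ Finset.range n, ξ i ω⟫) Filter.atTop (nhds 0))
      ∧ (∀ᵐ ω ∂μ', Filter.Tendsto
        (fun n => Real.exp ⟪u, x + ∑ i ∈ Finset.range n, ξ' i ω⟫) Filter.atTop Filter.atTop) :=
  tilted_walk_exp_limits_general d ν hmgf hnondeg u hu0 hu μ ξ hξmeas hξindep hξlaw μ' ξ' hξ'meas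
    hξ'indep hξ'law x
end

section
/- For Pólya's urn chain with states (r,t), 0 < r < t, and any 0 < p < 1 with q = 1 − p, the function h_p(r,t) = (t−1)·C(t−2, r−1)·p^{r−1} q^{t−r−1} is harmonic, and the corresponding h_p-transformed chain is a simple random walk: transition (r,t) → (r+1,t+1) has probability p and (r,t) → (r,t+1) has probability q. -/
/-- Transition probabilities of Pólya's urn chain on states `(r, t)`:
`(r,t) → (r+1,t+1)` with probability `r/t`, `(r,t) → (r,t+1)` with probability `1 - r/t`. -/
noncomputable def polyaP : ℕ × ℕ → ℕ × ℕ → ℝ := fun x y =>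
  if y = (x.1 + 1, x.2 + 1) then (x.1 : ℝ) / (x.2 : ℝ)
  else if y = (x.1, x.2 + 1) then 1 - (x.1 : ℝ) / (x.2 : ℝ)
  else 0

/-- The harmonic function `h_p(r,t) = (t-1) · C(t-2, r-1) · p^{r-1} q^{t-r-1}`. -/
noncomputable def polyaHp (p : ℝ) : ℕ × ℕ → ℝ := fun x =>
  ((x.2 : ℝ) - 1) * (Nat.choose (x.2 - 2) (x.1 - 1) : ℝ)
    * p ^ (x.1 - 1) * (1 - p) ^ (x.2 - x.1 - 1)

/-!
Writing `r = a + 1`, `t = a + b + 2`, one has `h_p(r,t) = (a+b+1) C(a+b,a) p^a q^b`, and the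
identities `(a+1) C(a+b+1,a+1) = (a+b+1) C(a+b,a) = (b+1) C(a+b+1,a)` turn the two one-step
contributions into `P(x, x + (1,1)) h_p(x + (1,1)) = p h_p(x)` and
`P(x, x + (0,1)) h_p(x + (0,1)) = q h_p(x)`. Adding them gives harmonicity, dividing by `h_p(x)`
gives the transformed chain.
-/

lemma polyaP_up (x : ℕ × ℕ) : polyaP x (x.1 + 1, x.2 + 1) = x.1 / x.2 := by
  simp [polyaP]

lemma polyaP_right (x : ℕ × ℕ) : polyaP x (x.1, x.2 + 1) = 1 - x.1 / x.2 := by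
  simp [polyaP]

lemma tsum_polyaP_mul (x : ℕ × ℕ) (f : ℕ × ℕ → ℝ) :
    ∑' y, polyaP x y * f y
      = polyaP x (x.1 + 1, x.2 + 1) * f (x.1 + 1, x.2 + 1)
        + polyaP x (x.1, x.2 + 1) * f (x.1, x.2 + 1) := by
  have hne : ((x.1 + 1, x.2 + 1) : ℕ × ℕ) ≠ (x.1, x.2 + 1) := by simp
  rw [tsum_eq_sum (s := {(x.1 + 1, x.2 + 1), (x.1, x.2 + 1)}), Finset.sum_pair hne]
  intro y hy
  simp only [Finset.mem_insert, Finset.mem_singleton, not_or] at hy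
  simp [polyaP, hy.1, hy.2]

lemma polyaHp_of_eq (p : ℝ) {r t a b : ℕ} (hr : r = a + 1) (ht : t = a + b + 2) :
    polyaHp p (r, t) = ((a + b + 1 : ℕ) : ℝ) * (a + b).choose a * p ^ a * (1 - p) ^ b := by
  subst hr ht
  simp only [polyaHp, show a + b + 2 - 2 = a + b by omega, show a + 1 - 1 = a by omega,
    show a + b + 2 - (a + 1) - 1 = b by omega]
  push_cast
  ring

lemma exists_eq_add_of_pos_of_lt {r t : ℕ} (hr : 0 < r) (hrt : r < t) :
    ∃ a b, r = a + 1 ∧ t = a + b + 2 :=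
  ⟨r - 1, t - r - 1, by omega, by omega⟩

lemma polyaP_up_mul_polyaHp (p : ℝ) {r t : ℕ} (hr : 0 < r) (hrt : r < t) :
    polyaP (r, t) (r + 1, t + 1) * polyaHp p (r + 1, t + 1) = p * polyaHp p (r, t) := by
  obtain ⟨a, b, rfl, rfl⟩ := exists_eq_add_of_pos_of_lt hr hrt
  have hchoose : ((a + 1) * (a + b + 1).choose (a + 1) : ℝ) = (a + b + 1) * (a + b).choose a := by
    rw [mul_comm]
    exact_mod_cast (Nat.add_one_mul_choose_eq (a + b) a).symm
  rw [polyaP_up, polyaHp_of_eq p (a := a + 1) (b := b) rfl (by omega), polyaHp_of_eq p rfl rfl,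
    Nat.add_right_comm a 1 b]
  field_simp
  push_cast
  linear_combination p ^ (a + 1) * (1 - p) ^ b * hchoose

lemma polyaP_right_mul_polyaHp (p : ℝ) {r t : ℕ} (hr : 0 < r) (hrt : r < t) :
    polyaP (r, t) (r, t + 1) * polyaHp p (r, t + 1) = (1 - p) * polyaHp p (r, t) := by
  obtain ⟨a, b, rfl, rfl⟩ := exists_eq_add_of_pos_of_lt hr hrt
  have hchoose : ((b + 1) * (a + b + 1).choose a : ℝ) = (a + b + 1) * (a + b).choose a := by
    have h := Nat.choose_mul_succ_eq (a + b) a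
    rw [show a + b + 1 - a = b + 1 by omega] at h
    rw [mul_comm, mul_comm _ ((a + b).choose a : ℝ)]
    exact_mod_cast h.symm
  rw [polyaP_right, polyaHp_of_eq p (a := a) (b := b + 1) rfl (by omega), polyaHp_of_eq p rfl rfl,
    ← Nat.add_assoc a b 1]
  field_simp
  push_cast
  linear_combination p ^ a * (1 - p) ^ (b + 1) * hchoose

lemma polyaHp_ne_zero {p : ℝ} (hp0 : p ≠ 0) (hp1 : p ≠ 1) {r t : ℕ} (hr : 0 < r) (hrt : r < t) :
    polyaHp p (r, t) ≠ 0 := by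
  obtain ⟨a, b, rfl, rfl⟩ := exists_eq_add_of_pos_of_lt hr hrt
  have hq : 1 - p ≠ 0 := sub_ne_zero.mpr hp1.symm
  have hchoose : ((a + b).choose a : ℝ) ≠ 0 := by
    exact_mod_cast (Nat.choose_pos (by omega)).ne'
  rw [polyaHp_of_eq p rfl rfl]
  positivity


/-- For Pólya's urn and any `0 < p < 1`, `q = 1 - p`, the function
`h_p(r,t) = (t-1) C(t-2,r-1) p^{r-1} q^{t-r-1}` is harmonic, and the `h_p`-transformed
chain is the simple random walk: `P^{h_p}((r,t),(r+1,t+1)) = p` and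
`P^{h_p}((r,t),(r,t+1)) = q`. -/
theorem polya_hp_harmonic_and_transform (p : ℝ) (hp0 : 0 < p) (hp1 : p < 1)
    (r t : ℕ) (hr : 0 < r) (hrt : r < t) :
    (polyaHp p (r, t) = ∑' y : ℕ × ℕ, polyaP (r, t) y * polyaHp p y)
      ∧ polyaP (r, t) (r + 1, t + 1) * polyaHp p (r + 1, t + 1) / polyaHp p (r, t) = p
      ∧ polyaP (r, t) (r, t + 1) * polyaHp p (r, t + 1) / polyaHp p (r, t) = 1 - p := by
  have hh := polyaHp_ne_zero hp0.ne' hp1.ne hr hrt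
  refine ⟨?_, ?_, ?_⟩
  · rw [tsum_polyaP_mul, polyaP_up_mul_polyaHp p hr hrt, polyaP_right_mul_polyaHp p hr hrt]
    ring
  · rw [polyaP_up_mul_polyaHp p hr hrt, mul_div_cancel_right₀ _ hh]
  · rw [polyaP_right_mul_polyaHp p hr hrt, mul_div_cancel_right₀ _ hh]
end
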